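/- arXiv:1702.01355 — 8 statements merged into one kernel-verified Lean document; each statement's English description precedes it below -/
import Mathlib

section
/- If every component of a graph G is a subdivision of a graph on at most n vertices, then G has no K_{1,n^2}-minor. -/
/-!
Let `S` be the branch set of the centre of a `K_{1,n²}`-model in `G`. The model is connected,
so it lives in a single component, which is a subdivision of a graph `H` on `m ≤ n` vertices.
Every leaf contributes a dart of `G` leaving `S`, different leaves contributing different darts,
and each such dart runs along one of the oriented paths subdividing an edge of `H`. Interior
vertices of these paths have degree two, so a walk inside `S` that starts between two exits of
a path from `S` is trapped between them; as `S` is connected, each oriented path leaves `S` at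
most once. Hence `n² ≤ #darts(H) = 2 |E(H)| ≤ m (m - 1) ≤ n (n - 1)`, which is absurd.
-/

open SimpleGraph

/-- `H` is a minor of `G`. -/
def IsMinor {V W : Type*} (G : SimpleGraph V) (H : SimpleGraph W) : Prop :=
  ∃ f : W → Set V,
    (∀ w, (f w).Nonempty) ∧
    (∀ w, (G.induce (f w)).Connected) ∧
    (∀ w₁ w₂, w₁ ≠ w₂ → Disjoint (f w₁) (f w₂)) ∧
    (∀ w₁ w₂, H.Adj w₁ w₂ → ∃ v₁ ∈ f w₁, ∃ v₂ ∈ f w₂, G.Adj v₁ v₂)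

/-- `G` is a subdivision of `H`: branch vertices are given by an injection `f`,
and each edge of `H` is replaced by a path of `G`; these paths are internally
disjoint from each other and from the branch vertices, and they cover `G`. -/
def IsSubdivisionOf {V W : Type*} (G : SimpleGraph V) (H : SimpleGraph W) : Prop :=
  ∃ (f : W → V) (P : ∀ ⦃a b : W⦄, H.Adj a b → G.Walk (f a) (f b)),
    Function.Injective f ∧
    (∀ ⦃a b⦄ (h : H.Adj a b), (P h).IsPath) ∧
    (∀ ⦃a b⦄ (h : H.Adj a b), P h.symm = (P h).reverse) ∧
    (∀ ⦃a b⦄ (h : H.Adj a b), ∀ w : W, f w ∈ (P h).support → w = a ∨ w = b) ∧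
    (∀ ⦃a b⦄ (h : H.Adj a b), ∀ ⦃c d⦄ (h' : H.Adj c d), s(a, b) ≠ s(c, d) →
      ∀ v, v ∈ (P h).support → v ∈ (P h').support →
        (v = f a ∨ v = f b) ∧ (v = f c ∨ v = f d)) ∧
    (∀ v : V, (∃ w, f w = v) ∨ ∃ (a b : _) (h : H.Adj a b), v ∈ (P h).support) ∧
    (∀ e : Sym2 V, e ∈ G.edgeSet ↔ ∃ (a b : _) (h : H.Adj a b), e ∈ (P h).edges)


namespace SimpleGraph.Walk

variable {V : Type*} {G : SimpleGraph V} {x y : V}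

def IsBare (p : G.Walk x y) : Prop :=
  ∀ v ∈ p.support, v ≠ x → v ≠ y → ∀ w, G.Adj v w → s(v, w) ∈ p.edges

lemma IsPath.eq_getVert_pred_or_succ_of_mem_edges {p : G.Walk x y} (hp : p.IsPath) {i : ℕ}
    (hi : i ≤ p.length) {w : V} (hw : s(p.getVert i, w) ∈ p.edges) :
    w = p.getVert (i - 1) ∨ w = p.getVert (i + 1) := by
  obtain ⟨j, hj, hje⟩ := List.mem_iff_getElem.mp hw
  rw [getElem_edges, Sym2.eq_iff] at hje
  have hj' : j < p.length := by simpa using hj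
  rcases hje with ⟨hji, rfl⟩ | ⟨rfl, hji⟩
  · obtain rfl := hp.getVert_injOn (by simp; omega) (by simpa using hi) hji
    exact .inr rfl
  · obtain rfl := hp.getVert_injOn (by simp; omega) (by simpa using hi) hji
    exact .inl rfl

lemma IsBare.eq_getVert_pred_or_succ_of_adj {p : G.Walk x y} (hb : p.IsBare) (hp : p.IsPath)
    {i : ℕ} (hi₀ : 0 < i) (hi : i < p.length) {w : V} (hw : G.Adj (p.getVert i) w) :
    w = p.getVert (i - 1) ∨ w = p.getVert (i + 1) := by
  refine hp.eq_getVert_pred_or_succ_of_mem_edges hi.le <|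
    hb _ (p.getVert_mem_support i) ?_ ?_ w hw
  · rw [Ne, hp.getVert_eq_start_iff hi.le]; omega
  · rw [Ne, hp.getVert_eq_end_iff hi.le]; omega

lemma IsBare.exists_getVert_Ioo_of_walk_induce {p : G.Walk x y} (hb : p.IsBare) (hp : p.IsPath)
    {S : Set V} {i j : ℕ} (hj : j ≤ p.length) (hiS : p.getVert i ∉ S) (hjS : p.getVert j ∉ S)
    {a b : S} (q : (G.induce S).Walk a b) {l : ℕ} (hil : i < l) (hlj : l < j)
    (ha : (a : V) = p.getVert l) :
    ∃ l', i < l' ∧ l' < j ∧ (b : V) = p.getVert l' := by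
  induction q generalizing l with
  | nil => exact ⟨l, hil, hlj, ha⟩
  | @cons a c b hac q ih =>
    rw [comap_adj, Function.Embedding.subtype_apply, ha] at hac
    rcases hb.eq_getVert_pred_or_succ_of_adj hp (by omega) (by omega) hac with hc | hc
    · refine ih (l := l - 1) ?_ (by omega) hc
      by_contra!
      exact hiS (by rw [show i = l - 1 by omega, ← hc]; exact c.2)
    · refine ih (l := l + 1) (by omega) ?_ hc
      by_contra!
      exact hjS (by rw [show j = l + 1 by omega, ← hc]; exact c.2)

lemma IsBare.dart_eq_of_fst_mem_of_snd_notMem {p : G.Walk x y} (hb : p.IsBare) (hp : p.IsPath)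
    {S : Set V} (hS : (G.induce S).Preconnected) {d₁ d₂ : G.Dart} (hd₁ : d₁ ∈ p.darts)
    (hd₂ : d₂ ∈ p.darts) (h₁ : d₁.fst ∈ S) (h₁' : d₁.snd ∉ S) (h₂ : d₂.fst ∈ S)
    (h₂' : d₂.snd ∉ S) : d₁ = d₂ := by
  suffices key : ∀ u v, u < v → v < p.length → p.getVert u ∈ S → p.getVert (u + 1) ∉ S →
      p.getVert v ∈ S → p.getVert (v + 1) ∉ S → False by
    obtain ⟨u, hu, rfl⟩ := List.mem_iff_getElem.mp hd₁
    obtain ⟨v, hv, rfl⟩ := List.mem_iff_getElem.mp hd₂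
    simp only [darts_getElem_eq_getVert, length_darts] at h₁ h₁' h₂ h₂' hu hv ⊢
    rcases lt_trichotomy u v with huv | rfl | hvu
    · exact (key u v huv hv h₁ h₁' h₂ h₂').elim
    · rfl
    · exact (key v u hvu hu h₂ h₂' h₁ h₁').elim
  intro u v huv hv h₁ h₁' h₂ h₂'
  have huv' : u + 1 < v := lt_of_le_of_ne huv fun h => h₁' (h ▸ h₂)
  -- a walk inside `S` from the second exit back to the first is trapped between the two
  obtain ⟨q⟩ := hS ⟨_, h₂⟩ ⟨_, h₁⟩
  obtain ⟨l, hul, hlv, hl⟩ :=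
    hb.exists_getVert_Ioo_of_walk_induce hp hv h₁' h₂' q huv' (Nat.lt_succ_self v) rfl
  have := hp.getVert_injOn (by simp; omega) (by simp; omega) hl
  omega

end SimpleGraph.Walk

section Subdivision

variable {V W : Type*} {G : SimpleGraph V} {H : SimpleGraph W}

theorem IsSubdivisionOf.exists_bare_paths (hGH : IsSubdivisionOf G H) :
    ∃ (f : W → V) (P : ∀ ⦃a b : W⦄, H.Adj a b → G.Walk (f a) (f b)),
      (∀ ⦃a b⦄ (h : H.Adj a b), (P h).IsPath) ∧ (∀ ⦃a b⦄ (h : H.Adj a b), (P h).IsBare) ∧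
      ∀ d : G.Dart, ∃ e : H.Dart, d ∈ (P e.adj).darts := by
  obtain ⟨f, P, -, hpath, hsymm, -, hdisj, -, hedges⟩ := hGH
  refine ⟨f, P, hpath, fun a b h v hv hva hvb w hvw => ?_, fun d => ?_⟩
  · obtain ⟨a', b', h', hvw'⟩ := (hedges s(v, w)).mp hvw
    by_cases hab : s(a, b) = s(a', b')
    · rcases Sym2.eq_iff.mp hab with ⟨rfl, rfl⟩ | ⟨rfl, rfl⟩
      · exact hvw'
      · rwa [hsymm h, Walk.edges_reverse, List.mem_reverse] at hvw'
    · exact ((hdisj h h' hab v hv (Walk.fst_mem_support_of_mem_edges _ hvw')).1.elim hva hvb).elim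
  · obtain ⟨a, b, h, hd⟩ := (hedges d.edge).mp d.adj
    obtain ⟨d', hd', hdd'⟩ := List.mem_map.mp hd
    rcases (dart_edge_eq_iff d' d).mp hdd' with rfl | rfl
    · exact ⟨⟨(a, b), h⟩, hd'⟩
    · refine ⟨⟨(b, a), h.symm⟩, ?_⟩
      change d ∈ (P h.symm).darts
      rw [hsymm h, Walk.darts_reverse, List.mem_reverse, List.mem_map]
      exact ⟨d.symm, hd', d.symm_symm⟩

lemma IsSubdivisionOf.nonempty [Nonempty V] (hGH : IsSubdivisionOf G H) : Nonempty W := by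
  obtain ⟨f, P, -, -, -, -, -, hcover, -⟩ := hGH
  obtain ⟨v⟩ := ‹Nonempty V›
  rcases hcover v with ⟨w, -⟩ | ⟨w, -⟩ <;> exact ⟨w⟩

theorem IsSubdivisionOf.card_le_of_isMinor_completeBipartiteGraph {α ι : Type*} [Fintype W]
    [DecidableRel H.Adj] [Nonempty α] [Fintype ι] (hGH : IsSubdivisionOf G H)
    (hminor : IsMinor G (completeBipartiteGraph α ι)) :
    Fintype.card ι ≤ 2 * H.edgeFinset.card := by
  obtain ⟨f, P, hpath, hbare, hdarts⟩ := hGH.exists_bare_paths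
  obtain ⟨B, -, hconn, hdisj, hadj⟩ := hminor
  obtain ⟨a⟩ := ‹Nonempty α›
  have hleave : ∀ i, ∃ d : G.Dart, d.fst ∈ B (.inl a) ∧ d.snd ∈ B (.inr i) := fun i => by
    obtain ⟨u, hu, v, hv, huv⟩ := hadj (.inl a) (.inr i) (by simp)
    exact ⟨⟨(u, v), huv⟩, hu, hv⟩
  choose d hfst hsnd using hleave
  have hsnd_notMem : ∀ i, (d i).snd ∉ B (.inl a) := fun i hi =>
    Set.disjoint_left.mp (hdisj _ _ Sum.inl_ne_inr) hi (hsnd i)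
  choose e he using hdarts
  have hinj : Function.Injective (e ∘ d) := by
    intro i j (hij : e (d i) = e (d j))
    have hdj := he (d j)
    rw [← hij] at hdj
    have hd : d i = d j := (hbare _).dart_eq_of_fst_mem_of_snd_notMem (hpath _)
      (hconn _).preconnected (he (d i)) hdj (hfst i) (hsnd_notMem i) (hfst j) (hsnd_notMem j)
    by_contra hne
    exact Set.disjoint_left.mp (hdisj _ _ (by simpa using hne)) (hsnd i) (hd ▸ hsnd j)
  calc Fintype.card ι ≤ Fintype.card H.Dart := Fintype.card_le_of_injective _ hinj
    _ = 2 * H.edgeFinset.card := H.dart_card_eq_twice_card_edges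

end Subdivision

section Minor

variable {V W : Type*} {G : SimpleGraph V} {H : SimpleGraph W}

lemma SimpleGraph.connectedComponentMk_eq_of_connected_induce {s : Set V}
    (hs : (G.induce s).Connected) {u v : V} (hu : u ∈ s) (hv : v ∈ s) :
    G.connectedComponentMk u = G.connectedComponentMk v :=
  ConnectedComponent.sound <| (hs.preconnected ⟨u, hu⟩ ⟨v, hv⟩).map (Embedding.induce s).toHom

lemma SimpleGraph.connected_completeBipartiteGraph_of_unique {α β : Type*} [Unique α] :
    (completeBipartiteGraph α β).Connected := by
  refine (connected_iff_exists_forall_reachable _).mpr ⟨.inl default, ?_⟩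
  rintro (a | b)
  · rw [Subsingleton.elim a default]
  · exact Adj.reachable (by simp)

theorem IsMinor.exists_isMinor_induce_supp (hGH : IsMinor G H) (hH : H.Connected) :
    ∃ c : G.ConnectedComponent, IsMinor (G.induce c.supp) H := by
  obtain ⟨B, hne, hconn, hdisj, hadj⟩ := hGH
  obtain ⟨w₀⟩ := hH.nonempty
  obtain ⟨v₀, hv₀⟩ := hne w₀
  have hsupp : ∀ w, B w ⊆ (G.connectedComponentMk v₀).supp := by
    intro w
    obtain ⟨p⟩ := hH.preconnected w w₀
    induction p with
    | nil => exact fun v hv => connectedComponentMk_eq_of_connected_induce (hconn _) hv hv₀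
    | cons hww' p ih =>
      intro v hv
      obtain ⟨x, hx, y, hy, hxy⟩ := hadj _ _ hww'
      rw [ConnectedComponent.mem_supp_iff,
        connectedComponentMk_eq_of_connected_induce (hconn _) hv hx,
        ConnectedComponent.connectedComponentMk_eq_of_adj hxy]
      exact ih hv₀ hy
  refine ⟨G.connectedComponentMk v₀, fun w => Subtype.val ⁻¹' B w, fun w => ?_, fun w => ?_,
    fun w₁ w₂ hw => (hdisj w₁ w₂ hw).preimage _, fun w₁ w₂ hw => ?_⟩
  · obtain ⟨v, hv⟩ := hne w
    exact ⟨⟨v, hsupp w hv⟩, hv⟩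
  · let φ : G.induce (B w) →g (G.induce _).induce (Subtype.val ⁻¹' B w) :=
      { toFun := fun v => ⟨⟨v, hsupp w v.2⟩, v.2⟩, map_rel' := id }
    exact (hconn w).map φ fun v => ⟨⟨v.1, v.2⟩, rfl⟩
  · obtain ⟨x, hx, y, hy, hxy⟩ := hadj w₁ w₂ hw
    exact ⟨⟨x, hsupp w₁ hx⟩, hx, ⟨y, hsupp w₂ hy⟩, hy, hxy⟩

end Minor

lemma SimpleGraph.two_mul_card_edgeFinset_le {W : Type*} [Fintype W] (H : SimpleGraph W)
    [DecidableRel H.Adj] : 2 * H.edgeFinset.card ≤ Fintype.card W * (Fintype.card W - 1) :=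
  calc 2 * H.edgeFinset.card ≤ 2 * (Fintype.card W).choose 2 := by
        gcongr; exact card_edgeFinset_le_card_choose_two
    _ ≤ Fintype.card W * (Fintype.card W - 1) := by
        rw [Nat.choose_two_right]; exact Nat.mul_div_le _ _

theorem no_large_star_minor_of_components_subdivisions_general {V : Type}
    (G : SimpleGraph V) (n : ℕ)
    (h : ∀ c : G.ConnectedComponent, ∃ (m : ℕ) (H : SimpleGraph (Fin m)),
      m ≤ n ∧ IsSubdivisionOf (G.induce c.supp) H) :
    ¬ IsMinor G (completeBipartiteGraph (Fin 1) (Fin (n ^ 2))) := by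
  intro hminor
  obtain ⟨c, hc⟩ := hminor.exists_isMinor_induce_supp connected_completeBipartiteGraph_of_unique
  obtain ⟨m, H, hmn, hsub⟩ := h c
  classical
  have : Nonempty c.supp := c.nonempty_supp.to_subtype
  have hm : 0 < m := Fin.pos_iff_nonempty.mpr hsub.nonempty
  have hstar := hsub.card_le_of_isMinor_completeBipartiteGraph hc
  have hedges := H.two_mul_card_edgeFinset_le
  rw [Fintype.card_fin] at hstar hedges
  have hmn' : m * (m - 1) ≤ n * (n - 1) := Nat.mul_le_mul hmn (by omega)
  obtain ⟨k, rfl⟩ : ∃ k, n = k + 1 := ⟨n - 1, by omega⟩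
  rw [Nat.add_sub_cancel] at hmn'
  nlinarith

/-- If every component of `G` is a subdivision of a graph on at most `n` vertices,
then `G` has no `K_{1,n²}`-minor. -/
theorem no_large_star_minor_of_components_subdivisions {V : Type} [Fintype V]
    (G : SimpleGraph V) (n : ℕ)
    (h : ∀ c : G.ConnectedComponent, ∃ (m : ℕ) (H : SimpleGraph (Fin m)),
      m ≤ n ∧ IsSubdivisionOf (G.induce c.supp) H) :
    ¬ IsMinor G (completeBipartiteGraph (Fin 1) (Fin (n ^ 2))) :=
  no_large_star_minor_of_components_subdivisions_general G n h
end

section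
/- Let X and Y be finite sets of integers with |X| ≥ n(m+1). Then either (1) there exist x_1,...,x_n ∈ X and y_1,...,y_n ∈ Y with x_1 < y_1 < x_2 < y_2 < ... < x_n < y_n, or (2) there exist x_1 < x_2 < ... < x_m in X such that no element of Y lies in the closed interval [x_1, x_m]. -/
/-- Lemma on interleaving sequences: if `|X| ≥ n(m+1)` then either `X` and `Y`
interleave `n` times (`x₁ < y₁ < x₂ < y₂ < ⋯ < xₙ < yₙ` with `xᵢ ∈ X`, `yᵢ ∈ Y`),
or `X` has an increasing sequence of `m` elements whose closed interval misses `Y`. -/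
theorem interleave_or_gap (n m : ℕ) (hn : 0 < n) (hm : 0 < m)
    (X Y : Finset ℤ) (hX : n * (m + 1) ≤ X.card) :
    (∃ (x y : Fin n → ℤ),
      (∀ i, x i ∈ X) ∧ (∀ i, y i ∈ Y) ∧
      (∀ i, x i < y i) ∧ (∀ i j : Fin n, i < j → y i < x j)) ∨
    (∃ x : Fin m → ℤ,
      (∀ i, x i ∈ X) ∧ StrictMono x ∧
      ∀ z ∈ Y, ¬ (x ⟨0, hm⟩ ≤ z ∧ z ≤ x ⟨m - 1, Nat.sub_lt hm one_pos⟩)) := by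
  have key : ∀ i j : ℕ, i < n → j ≤ m → i * (m + 1) + j < X.card := by
    intro i j hi hj
    have h1 : i * (m + 1) + j < (i + 1) * (m + 1) := by
      rw [add_mul, one_mul]; omega
    have h2 : (i + 1) * (m + 1) ≤ n * (m + 1) :=
      Nat.mul_le_mul_right _ hi
    omega
  set f := X.orderEmbOfFin (rfl : X.card = X.card) with hf
  by_cases h : ∀ i : Fin n, ∃ y ∈ Y,
      f ⟨i * (m + 1) + 1, key i 1 i.2 hm⟩ ≤ y ∧ y ≤ f ⟨i * (m + 1) + m, key i m i.2 le_rfl⟩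
  · left
    choose y hyY hy1 hy2 using h
    refine ⟨fun i => f ⟨i * (m + 1), key i 0 i.2 (Nat.zero_le _)⟩, y,
      fun i => X.orderEmbOfFin_mem _ _, hyY, ?_, ?_⟩
    · intro i
      have : f ⟨i * (m + 1), key i 0 i.2 (Nat.zero_le _)⟩
          < f ⟨i * (m + 1) + 1, key i 1 i.2 hm⟩ :=
        f.strictMono (by simp [Fin.lt_def])
      exact lt_of_lt_of_le this (hy1 i)
    · intro i j hij
      have hlt : (i : ℕ) * (m + 1) + m < j * (m + 1) := by
        have h1 : (i : ℕ) * (m + 1) + m < (i + 1) * (m + 1) := by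
          rw [add_mul, one_mul]; omega
        have h2 : ((i : ℕ) + 1) * (m + 1) ≤ j * (m + 1) :=
          Nat.mul_le_mul_right _ hij
        omega
      have : f ⟨i * (m + 1) + m, key i m i.2 le_rfl⟩
          < f ⟨j * (m + 1), key j 0 j.2 (Nat.zero_le _)⟩ :=
        f.strictMono (by simpa [Fin.lt_def] using hlt)
      exact lt_of_le_of_lt (hy2 i) this
  · right
    push_neg at h
    obtain ⟨i, hi⟩ := h
    have hidx : ∀ j : Fin m, (i : ℕ) * (m + 1) + (j + 1) < X.card :=
      fun j => key i (j + 1) i.2 j.2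
    refine ⟨fun j => f ⟨i * (m + 1) + (j + 1), hidx j⟩,
      fun j => X.orderEmbOfFin_mem _ _, ?_, ?_⟩
    · intro a b hab
      have hab' : (a:ℕ) < b := hab
      exact f.strictMono (by rw [Fin.mk_lt_mk]; omega)
    · intro z hz hcon
      obtain ⟨h1, h2⟩ := hcon
      have e1 : ((⟨0, hm⟩ : Fin m) : ℕ) + 1 = 1 := rfl
      have e2 : ((⟨m - 1, Nat.sub_lt hm one_pos⟩ : Fin m) : ℕ) + 1 = m := by
        simp; omega
      have hl : f ⟨i * (m + 1) + 1, key i 1 i.2 hm⟩ ≤ z := by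
        convert h1 using 3
      have hr : z ≤ f ⟨i * (m + 1) + m, key i m i.2 le_rfl⟩ := by
        convert h2 using 3
        omega
      exact absurd hr (not_le.mpr (hi z hz hl))
end

section
/- Let G be a 2-connected graph, let x, y be vertices of G such that G − {x,y} has at least 3 connected components, and suppose {x,y} is not an admissible 2-cut. Then G is isomorphic to K_{2,3}. -/
open SimpleGraph

/-- `G` is a 2-sum of `G₁` and `G₂` with joins `j₁, j₂`.  Here `zᵢ` is a vertex of
`Gᵢ` of degree two with distinct neighbors `xᵢ, yᵢ`; the graphs `Gᵢ - zᵢ` (with the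
edge `xᵢyᵢ` removed if present) are glued into `G` along `x₁ = x₂ = j₁` and
`y₁ = y₂ = j₂`, and the edge `j₁j₂` is present in `G` iff `xᵢyᵢ ∈ E(Gᵢ)` for some `i`. -/
def IsTwoSumOf {V V₁ V₂ : Type*} (G : SimpleGraph V) (G₁ : SimpleGraph V₁)
    (G₂ : SimpleGraph V₂) (j₁ j₂ : V) : Prop :=
  ∃ (z₁ x₁ y₁ : V₁) (z₂ x₂ y₂ : V₂) (f₁ : V₁ → V) (f₂ : V₂ → V),
    x₁ ≠ y₁ ∧ x₂ ≠ y₂ ∧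
    (∀ u, G₁.Adj z₁ u ↔ u = x₁ ∨ u = y₁) ∧
    (∀ u, G₂.Adj z₂ u ↔ u = x₂ ∨ u = y₂) ∧
    Set.InjOn f₁ {v | v ≠ z₁} ∧ Set.InjOn f₂ {v | v ≠ z₂} ∧
    f₁ x₁ = j₁ ∧ f₁ y₁ = j₂ ∧ f₂ x₂ = j₁ ∧ f₂ y₂ = j₂ ∧
    (∀ v : V, v ∈ f₁ '' {u | u ≠ z₁} ∪ f₂ '' {u | u ≠ z₂}) ∧
    (f₁ '' {u | u ≠ z₁}) ∩ (f₂ '' {u | u ≠ z₂}) = {j₁, j₂} ∧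
    (∀ u v, u ≠ z₁ → v ≠ z₁ → s(u, v) ≠ s(x₁, y₁) →
      (G.Adj (f₁ u) (f₁ v) ↔ G₁.Adj u v)) ∧
    (∀ u v, u ≠ z₂ → v ≠ z₂ → s(u, v) ≠ s(x₂, y₂) →
      (G.Adj (f₂ u) (f₂ v) ↔ G₂.Adj u v)) ∧
    (G.Adj j₁ j₂ ↔ (G₁.Adj x₁ y₁ ∨ G₂.Adj x₂ y₂)) ∧
    (∀ a b, G.Adj a b →
      (a ∈ f₁ '' {u | u ≠ z₁} ∧ b ∈ f₁ '' {u | u ≠ z₁}) ∨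
      (a ∈ f₂ '' {u | u ≠ z₂} ∧ b ∈ f₂ '' {u | u ≠ z₂}))

/-- `{x, y}` is an admissible 2-cut of `G`: `G` can be expressed as a 2-sum of two
graphs, each having fewer edges than `G`, with `{x, y}` the set of joins. -/
def AdmissibleTwoCut {V : Type*} (G : SimpleGraph V) (x y : V) : Prop :=
  ∃ (n₁ n₂ : ℕ) (G₁ : SimpleGraph (Fin n₁)) (G₂ : SimpleGraph (Fin n₂)),
    IsTwoSumOf G G₁ G₂ x y ∧
    G₁.edgeSet.ncard < G.edgeSet.ncard ∧ G₂.edgeSet.ncard < G.edgeSet.ncard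

/-- `G` is 2-connected: at least 3 vertices, and deleting any single vertex
leaves a connected graph. -/
def TwoConnected {V : Type*} [Fintype V] (G : SimpleGraph V) : Prop :=
  3 ≤ Fintype.card V ∧ ∀ v : V, (G.induce {u | u ≠ v}).Connected

/-!
Put `W = V ∖ {x, y}`. By 2-connectivity every component of `G[W]` sends an edge to `x` and one
to `y`. If `S ⊆ W` is a union of components, `G` is the 2-sum of `G[S ∪ {x, y}]` and
`G[V ∖ S] - xy`, each with a new vertex of degree two attached to `x` and `y`; a summand has
fewer edges than `G` as soon as three edges of `G` lie off its side.
If `xy` is an edge, or some component spans an edge, one such component is a suitable `S`: the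
two other components supply three edges on the other side. Otherwise every vertex of `W` is
joined to exactly `x` and `y`, so `G = K_{2,|W|}`; two vertices of `W` form a suitable `S` when
`|W| ≥ 4`, and `|W| ≥ 3` since `G[W]` has at least three components.
-/

lemma exists_ne_ne_of_three_le_natCard {α : Type*} (h : 3 ≤ Nat.card α) (c : α) :
    ∃ d d', d ≠ d' ∧ d ≠ c ∧ d' ≠ c := by
  have : Finite α := Nat.finite_of_card_ne_zero (by omega)
  have hc : 1 < ({c}ᶜ : Set α).ncard := by
    rw [Set.ncard_compl, Set.ncard_singleton]
    omega
  obtain ⟨d, d', hd, hd', hdd'⟩ := (Set.one_lt_ncard_iff).1 hc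
  exact ⟨d, d', hdd', hd, hd'⟩

lemma two_lt_ncard_setOf_of_fan {V : Type*} [Finite V] {P : Sym2 V → Prop} {x y a b c : V}
    (hxy : x ≠ y) (hay : a ≠ y) (hcy : c ≠ y) (hac : a ≠ c)
    (ha : P s(a, x)) (hb : P s(b, y)) (hc : P s(c, x)) : 2 < {e | P e}.ncard :=
  (Set.two_lt_ncard_iff).2 ⟨_, _, _, ha, hb, hc, by simp [hxy, hay],
    fun h => hac (Sym2.congr_left.1 h), by simp [hxy.symm, hcy.symm]⟩

lemma Option.image_elim'_setOf_ne_none {V : Type*} (x : V) (T : Set V) :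
    Option.elim' x Subtype.val '' {u : Option T | u ≠ none} = T := by
  ext v
  constructor
  · rintro ⟨_ | u, hu, rfl⟩
    exacts [absurd rfl hu, u.2]
  · exact fun hv => ⟨some ⟨v, hv⟩, by simp, rfl⟩

lemma Option.injOn_elim'_setOf_ne_none {V : Type*} (x : V) (T : Set V) :
    Set.InjOn (Option.elim' x Subtype.val) {u : Option T | u ≠ none} := by
  rintro (_ | a) ha (_ | b) hb h
  exacts [rfl, absurd rfl ha, absurd rfl hb, congrArg some (Subtype.ext h)]

section IsTwoSumOf

variable {V V₁ V₂ V₁' : Type*} {G : SimpleGraph V} {G₁ : SimpleGraph V₁}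
  {G₂ : SimpleGraph V₂} {j₁ j₂ : V}

theorem IsTwoSumOf.symm (h : IsTwoSumOf G G₁ G₂ j₁ j₂) : IsTwoSumOf G G₂ G₁ j₁ j₂ := by
  obtain ⟨z₁, x₁, y₁, z₂, x₂, y₂, f₁, f₂, h1, h2, h3, h4, h5, h6, h7, h8, h9, h10,
    h11, h12, h13, h14, h15, h16⟩ := h
  exact ⟨z₂, x₂, y₂, z₁, x₁, y₁, f₂, f₁, h2, h1, h4, h3, h6, h5, h9, h10, h7, h8,
    fun v => (h11 v).symm, (Set.inter_comm _ _).trans h12, h14, h13, h15.trans or_comm,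
    fun a b hab => (h16 a b hab).symm⟩

theorem IsTwoSumOf.comap_left (φ : V₁' ≃ V₁) (h : IsTwoSumOf G G₁ G₂ j₁ j₂) :
    IsTwoSumOf G (G₁.comap φ) G₂ j₁ j₂ := by
  obtain ⟨z₁, x₁, y₁, z₂, x₂, y₂, f₁, f₂, h1, h2, h3, h4, h5, h6, h7, h8, h9, h10,
    h11, h12, h13, h14, h15, h16⟩ := h
  have hpre : {u | u ≠ φ.symm z₁} = φ ⁻¹' {v | v ≠ z₁} := by
    ext u
    simp [Equiv.eq_symm_apply]
  have himage : (f₁ ∘ φ) '' {u | u ≠ φ.symm z₁} = f₁ '' {u | u ≠ z₁} := by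
    rw [hpre, Set.image_comp, φ.image_preimage]
  refine ⟨φ.symm z₁, φ.symm x₁, φ.symm y₁, z₂, x₂, y₂, f₁ ∘ φ, f₂, by simpa using h1, h2,
    fun u => by simp [h3, ← Equiv.eq_symm_apply], h4, ?_, h6, by simpa using h7,
    by simpa using h8, h9, h10, himage ▸ h11, himage ▸ h12, fun u v hu hv huv => ?_, h14,
    by simpa using h15, himage ▸ h16⟩
  · rw [hpre]
    exact h5.comp φ.injective.injOn (Set.mapsTo_preimage _ _)
  · refine h13 (φ u) (φ v) (by simpa [Equiv.eq_symm_apply] using hu)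
      (by simpa [Equiv.eq_symm_apply] using hv) fun h => huv ?_
    simpa [Equiv.symm_apply_eq] using congrArg (Sym2.map φ.symm) h

end IsTwoSumOf

namespace SimpleGraph

variable {V : Type*}

lemma Iso.ncard_edgeSet_eq {W : Type*} {G : SimpleGraph V} {G' : SimpleGraph W} (φ : G ≃g G') :
    G.edgeSet.ncard = G'.edgeSet.ncard := by
  rw [← Nat.card_coe_set_eq, ← Nat.card_coe_set_eq]
  exact Nat.card_congr φ.mapEdgeSet

lemma ncard_edgeSet_induce_add_ncard_le [Finite V] {G H : SimpleGraph V} {T : Set V}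
    (hHG : H ≤ G) {F : Set (Sym2 V)} (hF : F ⊆ G.edgeSet)
    (hFT : ∀ e ∈ F, e ∈ H.edgeSet → ∃ v ∈ e, v ∉ T) :
    (H.induce T).edgeSet.ncard + F.ncard ≤ G.edgeSet.ncard := by
  set E := Sym2.map Subtype.val '' (H.induce T).edgeSet
  have hE : E ⊆ H.edgeSet := by
    rintro _ ⟨e, he, rfl⟩
    induction e using Sym2.ind with | h u v => exact he
  have hET : ∀ e ∈ E, ∀ v ∈ e, v ∈ T := by
    rintro _ ⟨e, -, rfl⟩ v hv
    obtain ⟨u, -, rfl⟩ := Sym2.mem_map.1 hv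
    exact u.2
  have hdisj : Disjoint E F := Set.disjoint_right.2 fun e heF heE => by
    obtain ⟨v, hv, hvT⟩ := hFT e heF (hE heE)
    exact hvT (hET e heE v hv)
  calc (H.induce T).edgeSet.ncard + F.ncard = (E ∪ F).ncard := by
        rw [Set.ncard_union_eq hdisj, Set.ncard_image_of_injective _
          (Sym2.map.injective Subtype.val_injective)]
    _ ≤ G.edgeSet.ncard :=
        Set.ncard_le_ncard (Set.union_subset (hE.trans (edgeSet_mono hHG)) hF)

/-- The summand of a 2-sum on the side `T` of the separation `{x, y}`. -/
def induceWithVertex (H : SimpleGraph V) (T : Set V) (x y : V) : SimpleGraph (Option T) where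
  Adj
    | some u, some v => H.Adj u v
    | none, some v | some v, none => v.1 = x ∨ v.1 = y
    | none, none => False
  symm := ⟨by
    rintro (_ | u) (_ | v) h
    exacts [h, h, h, h.symm]⟩
  loopless := ⟨by
    rintro (_ | u) h
    exacts [h, H.loopless.irrefl _ h]⟩

section induceWithVertex

variable {H : SimpleGraph V} {T : Set V} {x y : V}

@[simp] lemma induceWithVertex_adj_some_some {u v : T} :
    (H.induceWithVertex T x y).Adj (some u) (some v) ↔ H.Adj u v := Iff.rfl

@[simp] lemma induceWithVertex_adj_none_left {v : T} :
    (H.induceWithVertex T x y).Adj none (some v) ↔ v.1 = x ∨ v.1 = y := Iff.rfl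

lemma ncard_edgeSet_induceWithVertex_le [Finite V] (hx : x ∈ T) (hy : y ∈ T) :
    (H.induceWithVertex T x y).edgeSet.ncard ≤ (H.induce T).edgeSet.ncard + 2 := by
  have hsub : (H.induceWithVertex T x y).edgeSet ⊆
      Sym2.map some '' (H.induce T).edgeSet ∪ {s(none, some ⟨x, hx⟩), s(none, some ⟨y, hy⟩)} := by
    intro e he
    induction e using Sym2.ind with | h u v => ?_
    match u, v, he with
    | none, some v, (h : v.1 = x ∨ v.1 = y) | some v, none, (h : v.1 = x ∨ v.1 = y) =>
      rcases h with h | h <;> simp [← h, Sym2.eq_swap]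
    | some u, some v, he => exact Or.inl ⟨s(u, v), he, rfl⟩
  calc (H.induceWithVertex T x y).edgeSet.ncard
      ≤ (Sym2.map some '' (H.induce T).edgeSet).ncard +
          ({s(none, some ⟨x, hx⟩), s(none, some ⟨y, hy⟩)} : Set (Sym2 (Option T))).ncard :=
        (Set.ncard_le_ncard hsub).trans (Set.ncard_union_le _ _)
    _ ≤ (H.induce T).edgeSet.ncard + 2 := by
        gcongr
        · exact Set.ncard_image_le
        · exact (Set.ncard_insert_le _ _).trans (by simp)

end induceWithVertex

/-- `S` is a union of components of `G - {x, y}`. -/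
structure IsSeparatedBy (G : SimpleGraph V) (x y : V) (S : Set V) : Prop where
  left_notMem : x ∉ S
  right_notMem : y ∉ S
  mem_or_eq_of_adj : ∀ a ∈ S, ∀ b, G.Adj a b → b ∈ S ∨ b = x ∨ b = y

namespace IsSeparatedBy

variable {G : SimpleGraph V} {x y : V} {S : Set V}

lemma ne_left (hS : G.IsSeparatedBy x y S) {a : V} (ha : a ∈ S) : a ≠ x :=
  fun h => hS.left_notMem (h ▸ ha)

lemma ne_right (hS : G.IsSeparatedBy x y S) {a : V} (ha : a ∈ S) : a ≠ y :=
  fun h => hS.right_notMem (h ▸ ha)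

lemma symm (hS : G.IsSeparatedBy x y S) : G.IsSeparatedBy y x S :=
  ⟨hS.right_notMem, hS.left_notMem, fun a ha b hab => by
    have := hS.mem_or_eq_of_adj a ha b hab
    tauto⟩

lemma mem_insert_insert_or_mem_compl (hS : G.IsSeparatedBy x y S) {a b : V} (hab : G.Adj a b) :
    (a ∈ insert x (insert y S) ∧ b ∈ insert x (insert y S)) ∨ (a ∈ Sᶜ ∧ b ∈ Sᶜ) := by
  simp only [Set.mem_insert_iff, Set.mem_compl_iff]
  by_cases ha : a ∈ S
  · have := hS.mem_or_eq_of_adj a ha b hab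
    tauto
  by_cases hb : b ∈ S
  · have := hS.mem_or_eq_of_adj b hb a hab.symm
    tauto
  · exact Or.inr ⟨ha, hb⟩

theorem isTwoSumOf (hxy : x ≠ y) (hS : G.IsSeparatedBy x y S) :
    IsTwoSumOf G (G.induceWithVertex (insert x (insert y S)) x y)
      ((G.deleteEdges {s(x, y)}).induceWithVertex Sᶜ x y) x y := by
  have hx₂ : x ∈ Sᶜ := hS.left_notMem
  have hy₂ : y ∈ Sᶜ := hS.right_notMem
  refine ⟨none, some ⟨x, by simp⟩, some ⟨y, by simp⟩, none, some ⟨x, hx₂⟩, some ⟨y, hy₂⟩,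
    Option.elim' x Subtype.val, Option.elim' x Subtype.val, by simpa using hxy,
    by simpa using hxy, ?_, ?_, Option.injOn_elim'_setOf_ne_none x _,
    Option.injOn_elim'_setOf_ne_none x _, rfl, rfl, rfl, rfl, ?_, ?_, ?_, ?_, by simp, ?_⟩
  · rintro (_ | u) <;> simp [Subtype.ext_iff]
  · rintro (_ | u) <;> simp [Subtype.ext_iff]
  · intro v
    rw [Option.image_elim'_setOf_ne_none, Option.image_elim'_setOf_ne_none]
    by_cases hv : v ∈ S <;> simp [hv]
  · rw [Option.image_elim'_setOf_ne_none, Option.image_elim'_setOf_ne_none]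
    ext v
    constructor
    · rintro ⟨hv | hv | hv, hvS⟩
      exacts [Or.inl hv, Or.inr hv, absurd hv hvS]
    · rintro (rfl | rfl)
      exacts [⟨by simp, hx₂⟩, ⟨by simp, hy₂⟩]
  · rintro (_ | u) (_ | v) hu hv -
    all_goals first | exact absurd rfl hu | exact absurd rfl hv | exact Iff.rfl
  · rintro (_ | u) (_ | v) hu hv huv
    all_goals first | exact absurd rfl hu | exact absurd rfl hv | skip
    simp_all [Subtype.ext_iff]
  · intro a b hab
    rw [Option.image_elim'_setOf_ne_none, Option.image_elim'_setOf_ne_none]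
    exact hS.mem_insert_insert_or_mem_compl hab

theorem admissibleTwoCut [Fintype V] (hxy : x ≠ y) (hS : G.IsSeparatedBy x y S)
    (h₁ : 2 < {e ∈ G.edgeSet | ∃ v ∈ e, v ∉ S ∧ v ≠ x ∧ v ≠ y}.ncard)
    (h₂ : 2 < {e ∈ G.edgeSet | (∃ v ∈ e, v ∈ S) ∨ e = s(x, y)}.ncard) :
    AdmissibleTwoCut G x y := by
  classical
  set G₁ := G.induceWithVertex (insert x (insert y S)) x y
  set G₂ := (G.deleteEdges {s(x, y)}).induceWithVertex Sᶜ x y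
  refine ⟨_, _, G₁.overFin rfl, G₂.overFin rfl,
    (((hS.isTwoSumOf hxy).comap_left _).symm.comap_left _).symm, ?_, ?_⟩
  · rw [← (G₁.overFinIso rfl).ncard_edgeSet_eq]
    have hF := ncard_edgeSet_induce_add_ncard_le (T := insert x (insert y S)) le_rfl
      (Set.sep_subset G.edgeSet fun e => ∃ v ∈ e, v ∉ S ∧ v ≠ x ∧ v ≠ y) fun e he _ => ?_
    · calc G₁.edgeSet.ncard ≤ _ + 2 := ncard_edgeSet_induceWithVertex_le (by simp) (by simp)
        _ < G.edgeSet.ncard := by omega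
    · obtain ⟨v, hv, hvS, hvx, hvy⟩ := he.2
      exact ⟨v, hv, by simp [hvS, hvx, hvy]⟩
  · rw [← (G₂.overFinIso rfl).ncard_edgeSet_eq]
    have hF := ncard_edgeSet_induce_add_ncard_le (T := Sᶜ) (G.deleteEdges_le {s(x, y)})
      (Set.sep_subset G.edgeSet fun e => (∃ v ∈ e, v ∈ S) ∨ e = s(x, y)) fun e he he' => ?_
    · calc G₂.edgeSet.ncard ≤ _ + 2 :=
            ncard_edgeSet_induceWithVertex_le hS.left_notMem hS.right_notMem
        _ < G.edgeSet.ncard := by omega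
    · rcases he.2 with ⟨v, hv, hvS⟩ | rfl
      · exact ⟨v, hv, not_not.2 hvS⟩
      · simp at he'

lemma exists_adj_left (hxy : x ≠ y) (hconn : (G.induce {u | u ≠ y}).Connected)
    (hS : G.IsSeparatedBy x y S) {s : V} (hs : s ∈ S) : ∃ a ∈ S, G.Adj a x := by
  obtain ⟨p⟩ := hconn.preconnected ⟨s, hS.ne_right hs⟩ ⟨x, hxy⟩
  obtain ⟨d, -, hdS, hdS'⟩ := p.exists_boundary_dart (Subtype.val ⁻¹' S) hs hS.left_notMem
  refine ⟨d.fst, hdS, ?_⟩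
  rcases hS.mem_or_eq_of_adj _ hdS _ d.adj with h | h | h
  · exact absurd h hdS'
  · exact h ▸ d.adj
  · exact absurd h d.snd.2

end IsSeparatedBy

variable {G : SimpleGraph V} {x y : V}

lemma isSeparatedBy_image_supp (c : (G.induce {v | v ≠ x ∧ v ≠ y}).ConnectedComponent) :
    G.IsSeparatedBy x y (Subtype.val '' c.supp) := by
  refine ⟨fun ⟨v, _, hv⟩ => v.2.1 hv, fun ⟨v, _, hv⟩ => v.2.2 hv, ?_⟩
  rintro _ ⟨a, ha, rfl⟩ b hab
  by_cases hb : b ≠ x ∧ b ≠ y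
  · refine Or.inl ⟨⟨b, hb⟩, ?_, rfl⟩
    rw [ConnectedComponent.mem_supp_iff] at ha ⊢
    exact (ConnectedComponent.connectedComponentMk_eq_of_adj (G := G.induce _)
      (v := ⟨b, hb⟩) (w := a) hab.symm).trans ha
  · right
    tauto

lemma eq_of_mem_image_supp {W : Set V} {c d : (G.induce W).ConnectedComponent} {v : V}
    (hc : v ∈ Subtype.val '' c.supp) (hd : v ∈ Subtype.val '' d.supp) : c = d := by
  obtain ⟨a, ha, rfl⟩ := hc
  obtain ⟨b, hb, hab⟩ := hd
  rw [ConnectedComponent.mem_supp_iff] at ha hb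
  rw [← ha, ← hb, Subtype.ext hab]

theorem admissibleTwoCut_of_adj_iff [Fintype V] (hxy : x ≠ y)
    (hadj : ∀ a b, G.Adj a b ↔ (a ∈ ({x, y} : Set V) ↔ b ∉ ({x, y} : Set V)))
    (h4 : 3 < Nat.card ↥({x, y} : Set V)ᶜ) : AdmissibleTwoCut G x y := by
  classical
  obtain ⟨w⟩ : Nonempty (Fin 4 ↪ ↥({x, y} : Set V)ᶜ) := Function.Embedding.nonempty_of_card_le
    (by rw [Fintype.card_fin, ← Nat.card_eq_fintype_card]; exact h4)
  set v : Fin 4 → V := fun i => w i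
  have hv i : v i ≠ x ∧ v i ≠ y := by
    have := (w i).2
    simp only [Set.mem_compl_iff, Set.mem_insert_iff, Set.mem_singleton_iff, not_or] at this
    exact this
  have hne {i j} (hij : i ≠ j) : v i ≠ v j := fun h => hij (w.injective (Subtype.ext h))
  have hvx i : G.Adj (v i) x := by simp [hadj, hv i]
  have hvy i : G.Adj (v i) y := by simp [hadj, hv i]
  have hS : G.IsSeparatedBy x y {v 0, v 1} := by
    refine ⟨by simp [(hv 0).1.symm, (hv 1).1.symm], by simp [(hv 0).2.symm, (hv 1).2.symm], ?_⟩
    rintro a (rfl | rfl) b hab <;>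
      exact Or.inr (by simpa [hv, or_iff_not_imp_left] using (hadj _ b).1 hab)
  refine hS.admissibleTwoCut hxy ?_ ?_
  · refine two_lt_ncard_setOf_of_fan (a := v 2) (b := v 2) (c := v 3) hxy (hv 2).2 (hv 3).2
      (hne (by decide)) ?_ ?_ ?_ <;>
      simp [hvx, hvy, hne, hv]
  · exact two_lt_ncard_setOf_of_fan (a := v 0) (b := v 0) (c := v 1) hxy (hv 0).2 (hv 1).2
      (hne (by decide)) ⟨hvx 0, by simp⟩ ⟨hvy 0, by simp⟩ ⟨hvx 1, by simp⟩

theorem nonempty_iso_completeBipartiteGraph (s : Set V)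
    (h : ∀ a b, G.Adj a b ↔ (a ∈ s ↔ b ∉ s)) :
    Nonempty (G ≃g completeBipartiteGraph s ↥sᶜ) := by
  classical
  refine ⟨⟨(Equiv.Set.sumCompl s).symm, fun {a b} => ?_⟩⟩
  by_cases ha : a ∈ s <;> by_cases hb : b ∈ s <;>
    simp [Equiv.Set.sumCompl_symm_apply_of_mem, Equiv.Set.sumCompl_symm_apply_of_notMem, ha, hb, h]

end SimpleGraph

namespace TwoConnected

variable {V : Type*} [Fintype V] {G : SimpleGraph V} {x y : V}

lemma exists_adj_of_isSeparatedBy (h2 : TwoConnected G) (hxy : x ≠ y) {S : Set V}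
    (hS : G.IsSeparatedBy x y S) (hne : S.Nonempty) :
    (∃ a ∈ S, G.Adj a x) ∧ ∃ b ∈ S, G.Adj b y :=
  ⟨hS.exists_adj_left hxy (h2.2 y) hne.some_mem,
    hS.symm.exists_adj_left hxy.symm (h2.2 x) hne.some_mem⟩

/-- The edges `e` with `x ∈ e ↔ y ∈ e` are `xy` and the edges of `G - {x, y}`. -/
theorem admissibleTwoCut_of_balanced_edge (h2 : TwoConnected G) (hxy : x ≠ y)
    (hc : 3 ≤ Nat.card (G.induce {v | v ≠ x ∧ v ≠ y}).ConnectedComponent)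
    {e : Sym2 V} (he : e ∈ G.edgeSet) (hbal : x ∈ e ↔ y ∈ e) : AdmissibleTwoCut G x y := by
  set H := G.induce {v | v ≠ x ∧ v ≠ y}
  have hsep := isSeparatedBy_image_supp (G := G) (x := x) (y := y)
  have hadj (C : H.ConnectedComponent) :=
    h2.exists_adj_of_isSeparatedBy hxy (hsep C) (C.nonempty_supp.image _)
  obtain ⟨C, hCe⟩ : ∃ C : H.ConnectedComponent,
      (∃ v ∈ e, v ∈ Subtype.val '' C.supp) ∨ e = s(x, y) := by
    by_cases hx : x ∈ e
    · have : Nonempty H.ConnectedComponent := (Nat.card_pos_iff.1 (by omega)).1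
      exact ⟨Classical.arbitrary _, Or.inr ((Sym2.mem_and_mem_iff hxy).1 ⟨hx, hbal.1 hx⟩)⟩
    · have hu := e.out_fst_mem
      have hux : e.out.1 ≠ x := fun h => hx (h ▸ hu)
      have huy : e.out.1 ≠ y := fun h => hx (hbal.2 (h ▸ hu))
      exact ⟨H.connectedComponentMk ⟨_, hux, huy⟩, Or.inl ⟨_, hu, _, rfl, rfl⟩⟩
  obtain ⟨D, D', hDD', hDC, hD'C⟩ := exists_ne_ne_of_three_le_natCard hc C
  have hout {D} (hDC : D ≠ C) {v} (hv : v ∈ Subtype.val '' D.supp) :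
      v ∉ Subtype.val '' C.supp ∧ v ≠ x ∧ v ≠ y :=
    ⟨fun h => hDC (eq_of_mem_image_supp hv h), (hsep D).ne_left hv, (hsep D).ne_right hv⟩
  obtain ⟨⟨a, haD, hax⟩, b, hbD, hby⟩ := hadj D
  obtain ⟨⟨a', ha'D', ha'x⟩, -⟩ := hadj D'
  obtain ⟨⟨c, hcC, hcx⟩, d, hdC, hdy⟩ := hadj C
  refine (hsep C).admissibleTwoCut hxy ?_ ?_
  · exact two_lt_ncard_setOf_of_fan hxy (hout hDC haD).2.2 (hout hD'C ha'D').2.2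
      (fun h => hDD' (eq_of_mem_image_supp haD (h ▸ ha'D')))
      ⟨hax, a, by simp, hout hDC haD⟩ ⟨hby, b, by simp, hout hDC hbD⟩
      ⟨ha'x, a', by simp, hout hD'C ha'D'⟩
  · refine (Set.two_lt_ncard_iff).2 ⟨e, s(c, x), s(d, y), ⟨he, hCe⟩,
      ⟨hcx, Or.inl ⟨c, by simp, hcC⟩⟩, ⟨hdy, Or.inl ⟨d, by simp, hdC⟩⟩, ?_, ?_, ?_⟩
    · rintro rfl
      simp [hxy.symm, ((hsep C).ne_right hcC).symm] at hbal
    · rintro rfl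
      simp [hxy, ((hsep C).ne_left hdC).symm] at hbal
    · simp [hxy, (hsep C).ne_right hcC]

theorem adj_iff_of_forall_unbalanced (h2 : TwoConnected G) (hxy : x ≠ y)
    (h : ∀ e ∈ G.edgeSet, ¬(x ∈ e ↔ y ∈ e)) (a b : V) :
    G.Adj a b ↔ (a ∈ ({x, y} : Set V) ↔ b ∉ ({x, y} : Set V)) := by
  have hcross : ∀ w, w ≠ x → w ≠ y → G.Adj x w ∧ G.Adj y w := by
    intro w hwx hwy
    have hS : G.IsSeparatedBy x y {w} := by
      refine ⟨by simpa using hwx.symm, by simpa using hwy.symm, ?_⟩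
      rintro _ rfl c hc
      have := h _ (G.mem_edgeSet.2 hc)
      simp only [Sym2.mem_iff] at this
      tauto
    obtain ⟨⟨_, rfl, hx⟩, _, rfl, hy⟩ :=
      h2.exists_adj_of_isSeparatedBy hxy hS (Set.singleton_nonempty w)
    exact ⟨hx.symm, hy.symm⟩
  simp only [Set.mem_insert_iff, Set.mem_singleton_iff]
  constructor
  · intro hab
    have hunbal := h _ (G.mem_edgeSet.2 hab)
    simp only [Sym2.mem_iff] at hunbal
    grind [hab.ne]
  · intro hiff
    by_cases ha : a = x ∨ a = y
    · obtain ⟨hbx, hby⟩ : b ≠ x ∧ b ≠ y := by simpa [ha] using hiff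
      rcases ha with rfl | rfl
      exacts [(hcross b hbx hby).1, (hcross b hbx hby).2]
    · obtain ⟨hax, hay⟩ := not_or.1 ha
      rcases not_not.1 (hiff.not.1 ha) with rfl | rfl
      exacts [(hcross a hax hay).1.symm, (hcross a hax hay).2.symm]

end TwoConnected

/-- If `G` is 2-connected, `G - {x,y}` has at least 3 components, and `{x,y}` is
not an admissible 2-cut, then `G ≅ K_{2,3}`. -/
theorem isoK23_of_not_admissible {V : Type} [Fintype V] (G : SimpleGraph V)
    (x y : V) (hxy : x ≠ y) (h2 : TwoConnected G)
    (hc : 3 ≤ Nat.card ((G.induce {v : V | v ≠ x ∧ v ≠ y}).ConnectedComponent))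
    (hna : ¬ AdmissibleTwoCut G x y) :
    Nonempty (G ≃g completeBipartiteGraph (Fin 2) (Fin 3)) := by
  by_cases hbal : ∃ e ∈ G.edgeSet, x ∈ e ↔ y ∈ e
  · obtain ⟨e, he, hbal⟩ := hbal
    exact absurd (h2.admissibleTwoCut_of_balanced_edge hxy hc he hbal) hna
  have hadj := h2.adj_iff_of_forall_unbalanced hxy fun e he hbal' => hbal ⟨e, he, hbal'⟩
  have hxy₂ : Nat.card ↥({x, y} : Set V) = 2 := (Nat.card_coe_set_eq _).trans (Set.ncard_pair hxy)
  have hW₃ : Nat.card ↥({x, y} : Set V)ᶜ = 3 := by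
    refine le_antisymm (not_lt.1 fun h4 => hna (admissibleTwoCut_of_adj_iff hxy hadj h4)) ?_
    have hW : ({x, y} : Set V)ᶜ = {v | v ≠ x ∧ v ≠ y} := by ext; simp
    rw [hW]
    exact hc.trans (Nat.card_le_card_of_surjective _ Quot.mk_surjective)
  obtain ⟨φ⟩ := nonempty_iso_completeBipartiteGraph _ hadj
  exact ⟨φ.trans (completeBipartiteGraphCongr (Finite.equivFinOfCardEq hxy₂)
    (Finite.equivFinOfCardEq hW₃))⟩
end

section
/- Let G be a 2-connected graph, let x, y be nonadjacent vertices of G such that G − {x,y} has exactly 2 connected components, and suppose {x,y} is not an admissible 2-cut. Then at least one component of G − {x,y} is a single vertex. -/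
open SimpleGraph

/-! If both components `C₁, C₂` of `G - {x, y}` had at least two vertices, `G` would be the
2-sum, with joins `x, y`, of the graphs `Gᵢ = G[Cᵢ ∪ {x, y}] + zᵢ`, where the new vertex `zᵢ`
is adjacent exactly to `x` and `y`. Each `Gᵢ` has fewer edges than `G`: it gains the two edges at
`zᵢ` but loses every edge meeting the other component, and these include an edge at `x` and an
edge at `y` (by 2-connectivity) and an edge inside that component (which is connected and has at
least two vertices). So `{x, y}` would be an admissible 2-cut. -/

namespace SimpleGraph

variable {V : Type*} {G : SimpleGraph V}

def addVertex (G : SimpleGraph V) (N : Set V) : SimpleGraph (Option V) where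
  Adj
    | some u, some v => G.Adj u v
    | some u, none => u ∈ N
    | none, some v => v ∈ N
    | none, none => False
  symm := ⟨by rintro (_ | u) (_ | v) h <;> first | exact h | exact h.symm⟩
  loopless := ⟨by rintro (_ | u) h <;> first | exact h | exact G.loopless.irrefl u h⟩

section addVertex

variable {N : Set V} {u v : V}

@[simp] lemma addVertex_adj_some_some : (G.addVertex N).Adj (some u) (some v) ↔ G.Adj u v :=
  Iff.rfl

@[simp] lemma addVertex_adj_none_some : (G.addVertex N).Adj none (some v) ↔ v ∈ N := Iff.rfl

@[simp] lemma addVertex_not_adj_none_none : ¬(G.addVertex N).Adj none none := id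

lemma edgeSet_addVertex_subset :
    (G.addVertex N).edgeSet ⊆ Sym2.map some '' G.edgeSet ∪ (fun v ↦ s(none, some v)) '' N := by
  rintro ⟨_ | u, _ | v⟩ h
  · simp at h
  · exact Or.inr ⟨v, h, rfl⟩
  · exact Or.inr ⟨u, h, Sym2.eq_swap⟩
  · exact Or.inl ⟨s(u, v), h, rfl⟩

lemma ncard_edgeSet_addVertex_le [Finite V] :
    (G.addVertex N).edgeSet.ncard ≤ G.edgeSet.ncard + N.ncard :=
  calc (G.addVertex N).edgeSet.ncard
      ≤ (Sym2.map some '' G.edgeSet ∪ (fun v ↦ s(none, some v)) '' N).ncard :=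
        Set.ncard_le_ncard edgeSet_addVertex_subset (Set.toFinite _)
    _ ≤ (Sym2.map some '' G.edgeSet).ncard + ((fun v ↦ s(none, some v)) '' N).ncard :=
        Set.ncard_union_le _ _
    _ ≤ G.edgeSet.ncard + N.ncard := by
        rw [Set.ncard_image_of_injective _ (Sym2.map.injective (Option.some_injective V))]
        exact Nat.add_le_add_left (Set.ncard_image_le (Set.toFinite _)) _

end addVertex

lemma ConnectedComponent.exists_adj_of_nontrivial_supp (c : G.ConnectedComponent)
    (hc : c.supp.Nontrivial) : ∃ u ∈ c.supp, ∃ v ∈ c.supp, G.Adj u v := by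
  obtain ⟨u, hu, v, hv, huv⟩ := hc
  obtain ⟨w⟩ := c.reachable_of_mem_supp hu hv
  have hadj := w.adj_snd (w.not_nil_of_ne huv)
  exact ⟨u, hu, _, c.mem_supp_of_adj_mem_supp hu hadj, hadj⟩

lemma ConnectedComponent.mem_image_supp_of_adj {S : Set V}
    (c : (G.induce S).ConnectedComponent) {a b : V} (ha : a ∈ (↑) '' c.supp) (hab : G.Adj a b)
    (hb : b ∈ S) : b ∈ (↑) '' c.supp := by
  obtain ⟨a, ha, rfl⟩ := ha
  exact ⟨⟨b, hb⟩, c.mem_supp_of_adj_mem_supp ha hab, rfl⟩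

lemma ConnectedComponent.disjoint_image_supp {S : Set V}
    {c₁ c₂ : (G.induce S).ConnectedComponent} (hne : c₁ ≠ c₂) :
    Disjoint ((↑) '' c₁.supp : Set V) ((↑) '' c₂.supp) :=
  (Set.disjoint_image_iff Subtype.val_injective).mpr
    (pairwise_disjoint_supp_connectedComponent _ hne)

lemma exists_adj_mem_of_connected_induce_ne {x y : V} (hconn : (G.induce {u | u ≠ y}).Connected)
    (hxy : x ≠ y) {A : Set V} (hA : A.Nonempty) (hxA : x ∉ A) (hyA : y ∉ A)
    (hA_nbhd : ∀ a ∈ A, ∀ b ∉ A, G.Adj a b → b = x ∨ b = y) : ∃ a ∈ A, G.Adj x a := by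
  obtain ⟨a, ha⟩ := hA
  obtain ⟨w⟩ := hconn.preconnected ⟨a, fun h ↦ hyA (h ▸ ha)⟩ ⟨x, hxy⟩
  obtain ⟨d, -, hd₁, hd₂⟩ := w.exists_boundary_dart {u | (u : V) ∈ A} ha hxA
  rcases hA_nbhd _ hd₁ _ hd₂ d.adj with h | h
  · exact ⟨_, hd₁, h ▸ d.adj.symm⟩
  · exact absurd h d.snd.2

lemma ncard_edgeSet_induce_add_three_le [Finite V] {T : Set V} {x y b₁ b₂ b₃ b₄ : V}
    (hx : x ∈ T) (hy : y ∈ T) (hxy : x ≠ y) (hb₁ : b₁ ∉ T) (hb₂ : b₂ ∉ T) (hb₃ : b₃ ∉ T)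
    (hb₄ : b₄ ∉ T) (h₁ : G.Adj x b₁) (h₂ : G.Adj y b₂) (h₃ : G.Adj b₃ b₄) :
    (G.induce T).edgeSet.ncard + 3 ≤ G.edgeSet.ncard := by
  have hT {u v : V} (hu : u ∈ T) (hv : v ∉ T) : u ≠ v := fun h ↦ hv (h ▸ hu)
  set E := Sym2.map ((↑) : T → V) '' (G.induce T).edgeSet
  have hE : ∀ e ∈ E, ∀ v ∈ e, v ∈ T := by
    rintro _ ⟨e, -, rfl⟩ v hv
    obtain ⟨u, -, rfl⟩ := Sym2.mem_map.mp hv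
    exact u.2
  have hsub : insert s(x, b₁) (insert s(y, b₂) (insert s(b₃, b₄) E)) ⊆ G.edgeSet := by
    rintro _ (rfl | rfl | rfl | ⟨e, he, rfl⟩)
    · exact h₁
    · exact h₂
    · exact h₃
    · induction e using Sym2.ind
      exact he
  have h₃E : s(b₃, b₄) ∉ E := fun h ↦ hb₃ (hE _ h b₃ (Sym2.mem_mk_left _ _))
  have h₂E : s(y, b₂) ∉ insert s(b₃, b₄) E := by
    rintro (h | h)
    · exact (Sym2.mem_iff.mp (h ▸ Sym2.mem_mk_left y b₂)).elim (hT hy hb₃) (hT hy hb₄)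
    · exact hb₂ (hE _ h b₂ (Sym2.mem_mk_right _ _))
  have h₁E : s(x, b₁) ∉ insert s(y, b₂) (insert s(b₃, b₄) E) := by
    rintro (h | h | h)
    · exact (Sym2.mem_iff.mp (h ▸ Sym2.mem_mk_left x b₁)).elim hxy (hT hx hb₂)
    · exact (Sym2.mem_iff.mp (h ▸ Sym2.mem_mk_left x b₁)).elim (hT hx hb₃) (hT hx hb₄)
    · exact hb₁ (hE _ h b₁ (Sym2.mem_mk_right _ _))
  calc (G.induce T).edgeSet.ncard + 3
      = (insert s(x, b₁) (insert s(y, b₂) (insert s(b₃, b₄) E))).ncard := by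
        rw [Set.ncard_insert_of_notMem h₁E, Set.ncard_insert_of_notMem h₂E,
          Set.ncard_insert_of_notMem h₃E,
          Set.ncard_image_of_injective _ (Sym2.map.injective Subtype.val_injective)]
    _ ≤ G.edgeSet.ncard := Set.ncard_le_ncard hsub

section Iso

variable {V₁ W₁ : Type*} {G₁ : SimpleGraph V₁} {H₁ : SimpleGraph W₁}

lemma Iso.image_comp_symm_setOf_ne (e : G₁ ≃g H₁) (f : V₁ → V) (z : V₁) :
    (f ∘ e.symm) '' {w | w ≠ e z} = f '' {u | u ≠ z} := by
  rw [Set.image_comp]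
  congr 1
  ext u
  simp [e.symm_apply_eq]

lemma Iso.injOn_comp_symm_setOf_ne (e : G₁ ≃g H₁) {f : V₁ → V} {z : V₁}
    (hf : Set.InjOn f {u | u ≠ z}) : Set.InjOn (f ∘ e.symm) {w | w ≠ e z} :=
  hf.comp e.symm.injective.injOn fun w hw ↦ by simpa [e.symm_apply_eq] using hw

lemma Iso.adj_apply_iff_of_adj_iff (e : G₁ ≃g H₁) {z x y : V₁}
    (hz : ∀ u, G₁.Adj z u ↔ u = x ∨ u = y) (w : W₁) :
    H₁.Adj (e z) w ↔ w = e x ∨ w = e y := by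
  obtain ⟨u, rfl⟩ := e.surjective w
  rw [e.map_adj_iff, hz, e.apply_eq_iff_eq, e.apply_eq_iff_eq]

lemma Iso.adj_comp_symm_iff (e : G₁ ≃g H₁) {f : V₁ → V} {z x y : V₁}
    (hf : ∀ u v, u ≠ z → v ≠ z → s(u, v) ≠ s(x, y) → (G.Adj (f u) (f v) ↔ G₁.Adj u v))
    (u v : W₁) (hu : u ≠ e z) (hv : v ≠ e z) (huv : s(u, v) ≠ s(e x, e y)) :
    G.Adj ((f ∘ e.symm) u) ((f ∘ e.symm) v) ↔ H₁.Adj u v := by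
  obtain ⟨u, rfl⟩ := e.surjective u
  obtain ⟨v, rfl⟩ := e.surjective v
  simp only [Function.comp_apply, e.symm_apply_apply, e.map_adj_iff]
  exact hf u v (ne_of_apply_ne e hu) (ne_of_apply_ne e hv)
    (ne_of_apply_ne (Sym2.map e) (by simpa using huv))

end Iso

end SimpleGraph

section TwoSum

variable {V : Type*} {G : SimpleGraph V} {T : Set V} {x y : V}

lemma image_elim_setOf_ne_none (d : V) :
    (fun o : Option T ↦ o.elim d (↑)) '' {o | o ≠ none} = T := by
  ext v
  constructor
  · rintro ⟨_ | ⟨w, hw⟩, hne, rfl⟩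
    · exact absurd rfl hne
    · exact hw
  · intro hv
    exact ⟨some ⟨v, hv⟩, Option.some_ne_none _, rfl⟩

lemma injOn_elim_setOf_ne_none (d : V) :
    Set.InjOn (fun o : Option T ↦ o.elim d (↑)) {o | o ≠ none} := by
  rintro (_ | u) hu (_ | v) hv h
  · rfl
  · exact absurd rfl hu
  · exact absurd rfl hv
  · exact congrArg some (Subtype.ext h)

lemma adj_elim_iff_addVertex_induce_adj {N : Set T} (d : V) {u v : Option T}
    (hu : u ≠ none) (hv : v ≠ none) :
    G.Adj (u.elim d (↑)) (v.elim d (↑)) ↔ ((G.induce T).addVertex N).Adj u v := by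
  cases u with
  | none => exact absurd rfl hu
  | some a =>
    cases v with
    | none => exact absurd rfl hv
    | some b => rfl

lemma addVertex_induce_adj_none_iff (hx : x ∈ T) (hy : y ∈ T) (u : Option T) :
    ((G.induce T).addVertex ((↑) ⁻¹' {x, y})).Adj none u ↔
      u = some ⟨x, hx⟩ ∨ u = some ⟨y, hy⟩ := by
  cases u with
  | none => simp
  | some a => simp [Subtype.ext_iff]

theorem isTwoSumOf_addVertex_induce {T₁ T₂ : Set V} (hxy : x ≠ y) (hadj : ¬G.Adj x y)
    (hcover : T₁ ∪ T₂ = Set.univ) (hinter : T₁ ∩ T₂ = {x, y})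
    (hedge : ∀ a b, G.Adj a b → a ∈ T₁ ∧ b ∈ T₁ ∨ a ∈ T₂ ∧ b ∈ T₂) :
    IsTwoSumOf G ((G.induce T₁).addVertex ((↑) ⁻¹' {x, y}))
      ((G.induce T₂).addVertex ((↑) ⁻¹' {x, y})) x y := by
  have hx : x ∈ T₁ ∩ T₂ := hinter ▸ Set.mem_insert x {y}
  have hy : y ∈ T₁ ∩ T₂ := hinter ▸ Set.mem_insert_of_mem x rfl
  refine ⟨none, some ⟨x, hx.1⟩, some ⟨y, hy.1⟩, none, some ⟨x, hx.2⟩, some ⟨y, hy.2⟩,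
    (·.elim x (↑)), (·.elim x (↑)), by simpa using hxy, by simpa using hxy,
    addVertex_induce_adj_none_iff hx.1 hy.1, addVertex_induce_adj_none_iff hx.2 hy.2,
    injOn_elim_setOf_ne_none x, injOn_elim_setOf_ne_none x, rfl, rfl, rfl, rfl, ?_, ?_,
    fun u v hu hv _ ↦ adj_elim_iff_addVertex_induce_adj x hu hv,
    fun u v hu hv _ ↦ adj_elim_iff_addVertex_induce_adj x hu hv,
    iff_of_false hadj (by simpa using hadj), ?_⟩ <;>
  simp only [image_elim_setOf_ne_none]
  · simp [hcover]
  · exact hinter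
  · exact hedge

variable {V₁ V₂ W₁ W₂ : Type*} {G₁ : SimpleGraph V₁} {G₂ : SimpleGraph V₂}
  {H₁ : SimpleGraph W₁} {H₂ : SimpleGraph W₂}

theorem IsTwoSumOf.of_iso (h : IsTwoSumOf G G₁ G₂ x y) (e₁ : G₁ ≃g H₁) (e₂ : G₂ ≃g H₂) :
    IsTwoSumOf G H₁ H₂ x y := by
  obtain ⟨z₁, x₁, y₁, z₂, x₂, y₂, f₁, f₂, hxy₁, hxy₂, hz₁, hz₂, hinj₁, hinj₂, hx₁, hy₁, hx₂, hy₂,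
    hcover, hinter, hadj₁, hadj₂, hj, hedge⟩ := h
  refine ⟨e₁ z₁, e₁ x₁, e₁ y₁, e₂ z₂, e₂ x₂, e₂ y₂, f₁ ∘ e₁.symm, f₂ ∘ e₂.symm,
    e₁.injective.ne hxy₁, e₂.injective.ne hxy₂, e₁.adj_apply_iff_of_adj_iff hz₁, e₂.adj_apply_iff_of_adj_iff hz₂,
    e₁.injOn_comp_symm_setOf_ne hinj₁, e₂.injOn_comp_symm_setOf_ne hinj₂,
    by simpa using hx₁, by simpa using hy₁, by simpa using hx₂, by simpa using hy₂, ?_, ?_,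
    e₁.adj_comp_symm_iff hadj₁, e₂.adj_comp_symm_iff hadj₂,
    by rwa [e₁.map_adj_iff, e₂.map_adj_iff], ?_⟩ <;>
  simp only [e₁.image_comp_symm_setOf_ne, e₂.image_comp_symm_setOf_ne]
  · exact hcover
  · exact hinter
  · exact hedge

theorem admissibleTwoCut_of_isTwoSumOf [Finite V₁] [Finite V₂]
    (h : IsTwoSumOf G G₁ G₂ x y) (h₁ : G₁.edgeSet.ncard < G.edgeSet.ncard)
    (h₂ : G₂.edgeSet.ncard < G.edgeSet.ncard) : AdmissibleTwoCut G x y :=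
  have := Fintype.ofFinite V₁
  have := Fintype.ofFinite V₂
  ⟨_, _, G₁.overFin rfl, G₂.overFin rfl, h.of_iso (G₁.overFinIso rfl) (G₂.overFinIso rfl),
    Set.ncard_congr' (G₁.overFinIso rfl).mapEdgeSet ▸ h₁,
    Set.ncard_congr' (G₂.overFinIso rfl).mapEdgeSet ▸ h₂⟩

end TwoSum

section TwoCut

variable {V : Type*} {G : SimpleGraph V} {x y : V}

lemma notMem_image_supp_of_mem_pair (c : (G.induce {v | v ≠ x ∧ v ≠ y}).ConnectedComponent)
    {v : V} (hv : v ∈ ({x, y} : Set V)) : v ∉ ((↑) '' c.supp : Set V) := by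
  rintro ⟨u, -, rfl⟩
  rcases hv with h | h
  exacts [u.2.1 h, u.2.2 h]

lemma mem_pair_of_adj_of_notMem_image_supp
    (c : (G.induce {v | v ≠ x ∧ v ≠ y}).ConnectedComponent) {a b : V}
    (ha : a ∈ ((↑) '' c.supp : Set V)) (hb : b ∉ ((↑) '' c.supp : Set V)) (hab : G.Adj a b) :
    b ∈ ({x, y} : Set V) := by
  by_contra h
  simp only [Set.mem_insert_iff, Set.mem_singleton_iff, not_or] at h
  exact hb (c.mem_image_supp_of_adj ha hab h)

lemma mem_pair_or_mem_image_supp {c₁ c₂ : (G.induce {v | v ≠ x ∧ v ≠ y}).ConnectedComponent}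
    (hc : ∀ c, c = c₁ ∨ c = c₂) (v : V) :
    v ∈ ({x, y} : Set V) ∨ v ∈ ((↑) '' c₁.supp : Set V) ∨ v ∈ ((↑) '' c₂.supp : Set V) := by
  by_cases hv : v = x ∨ v = y
  · exact Or.inl hv
  rcases hc ((G.induce _).connectedComponentMk ⟨v, not_or.mp hv⟩) with h | h
  · exact Or.inr (Or.inl ⟨_, h, rfl⟩)
  · exact Or.inr (Or.inr ⟨_, h, rfl⟩)

lemma disjoint_pair_union_image_supp
    {c₁ c₂ : (G.induce {v | v ≠ x ∧ v ≠ y}).ConnectedComponent} (hne : c₁ ≠ c₂) :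
    Disjoint ({x, y} ∪ (↑) '' c₁.supp) ((↑) '' c₂.supp : Set V) :=
  Disjoint.union_left (Set.disjoint_left.mpr fun _ ↦ notMem_image_supp_of_mem_pair c₂)
    (ConnectedComponent.disjoint_image_supp hne)

theorem isTwoSumOf_of_two_components (hxy : x ≠ y) (hadj : ¬G.Adj x y)
    {c₁ c₂ : (G.induce {v | v ≠ x ∧ v ≠ y}).ConnectedComponent} (hne : c₁ ≠ c₂)
    (hc : ∀ c, c = c₁ ∨ c = c₂) :
    IsTwoSumOf G ((G.induce ({x, y} ∪ (↑) '' c₁.supp)).addVertex ((↑) ⁻¹' {x, y}))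
      ((G.induce ({x, y} ∪ (↑) '' c₂.supp)).addVertex ((↑) ⁻¹' {x, y})) x y := by
  have hside (c : (G.induce {v | v ≠ x ∧ v ≠ y}).ConnectedComponent) {a b : V}
      (ha : a ∈ ((↑) '' c.supp : Set V)) (hab : G.Adj a b) :
      a ∈ {x, y} ∪ ((↑) '' c.supp : Set V) ∧ b ∈ {x, y} ∪ ((↑) '' c.supp : Set V) := by
    refine ⟨Or.inr ha, ?_⟩
    by_cases hb : b ∈ ((↑) '' c.supp : Set V)
    · exact Or.inr hb
    · exact Or.inl (mem_pair_of_adj_of_notMem_image_supp c ha hb hab)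
  refine isTwoSumOf_addVertex_induce hxy hadj ?_ ?_ ?_
  · refine Set.eq_univ_of_forall fun v ↦ ?_
    rcases mem_pair_or_mem_image_supp hc v with h | h | h
    exacts [Or.inl (Or.inl h), Or.inl (Or.inr h), Or.inr (Or.inr h)]
  · rw [← Set.union_inter_distrib_left, (ConnectedComponent.disjoint_image_supp hne).inter_eq,
      Set.union_empty]
  · intro a b hab
    rcases mem_pair_or_mem_image_supp hc a with ha | ha | ha
    · rcases mem_pair_or_mem_image_supp hc b with hb | hb | hb
      · exact Or.inl ⟨Or.inl ha, Or.inl hb⟩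
      · exact Or.inl (hside c₁ hb hab.symm).symm
      · exact Or.inr (hside c₂ hb hab.symm).symm
    · exact Or.inl (hside c₁ ha hab)
    · exact Or.inr (hside c₂ ha hab)

lemma exists_adj_mem_image_supp [Fintype V] (h2 : TwoConnected G) (hxy : x ≠ y)
    (c : (G.induce {v | v ≠ x ∧ v ≠ y}).ConnectedComponent) :
    (∃ a ∈ ((↑) '' c.supp : Set V), G.Adj x a) ∧ ∃ b ∈ ((↑) '' c.supp : Set V), G.Adj y b := by
  have hne : ((↑) '' c.supp : Set V).Nonempty := c.nonempty_supp.image _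
  have hx := notMem_image_supp_of_mem_pair c (Set.mem_insert x {y})
  have hy := notMem_image_supp_of_mem_pair c (Set.mem_insert_of_mem x rfl)
  have hnbhd : ∀ a ∈ ((↑) '' c.supp : Set V), ∀ b ∉ ((↑) '' c.supp : Set V), G.Adj a b →
      b = x ∨ b = y := fun a ha b hb hab ↦ mem_pair_of_adj_of_notMem_image_supp c ha hb hab
  exact ⟨exists_adj_mem_of_connected_induce_ne (h2.2 y) hxy hne hx hy hnbhd,
    exists_adj_mem_of_connected_induce_ne (h2.2 x) hxy.symm hne hy hx
      fun a ha b hb hab ↦ (hnbhd a ha b hb hab).symm⟩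

lemma ncard_edgeSet_addVertex_induce_lt [Fintype V] (h2 : TwoConnected G) (hxy : x ≠ y)
    {c : (G.induce {v | v ≠ x ∧ v ≠ y}).ConnectedComponent} (hc : c.supp.Nontrivial)
    {T : Set V} (hx : x ∈ T) (hy : y ∈ T) (hT : Disjoint T ((↑) '' c.supp)) :
    ((G.induce T).addVertex ((↑) ⁻¹' {x, y})).edgeSet.ncard < G.edgeSet.ncard := by
  obtain ⟨⟨b₁, hb₁, h₁⟩, ⟨b₂, hb₂, h₂⟩⟩ := exists_adj_mem_image_supp h2 hxy c
  obtain ⟨b₃, hb₃, b₄, hb₄, h₃⟩ := c.exists_adj_of_nontrivial_supp hc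
  have hcount := ncard_edgeSet_induce_add_three_le hx hy hxy (hT.notMem_of_mem_right hb₁)
    (hT.notMem_of_mem_right hb₂) (hT.notMem_of_mem_right ⟨b₃, hb₃, rfl⟩)
    (hT.notMem_of_mem_right ⟨b₄, hb₄, rfl⟩) h₁ h₂ h₃
  have hN : ((↑) ⁻¹' {x, y} : Set T).ncard = 2 := by
    rw [Set.ncard_preimage_of_injective_subset_range Subtype.val_injective
      (by simp [Set.insert_subset_iff, hx, hy]), Set.ncard_pair hxy]
  have := ncard_edgeSet_addVertex_le (G := G.induce T) (N := (↑) ⁻¹' {x, y})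
  omega

end TwoCut

/-- If `G` is 2-connected, `x, y` are nonadjacent, `G - {x,y}` has exactly 2
components, and `{x,y}` is not an admissible 2-cut, then at least one component
of `G - {x,y}` is a single vertex. -/
theorem single_vertex_component_of_not_admissible {V : Type} [Fintype V]
    (G : SimpleGraph V) (x y : V) (hxy : x ≠ y) (hadj : ¬ G.Adj x y)
    (h2 : TwoConnected G)
    (hc : Nat.card ((G.induce {v : V | v ≠ x ∧ v ≠ y}).ConnectedComponent) = 2)
    (hna : ¬ AdmissibleTwoCut G x y) :
    ∃ c : (G.induce {v : V | v ≠ x ∧ v ≠ y}).ConnectedComponent,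
      c.supp.ncard = 1 := by
  by_contra! hsingle
  have hnt (c : (G.induce {v : V | v ≠ x ∧ v ≠ y}).ConnectedComponent) : c.supp.Nontrivial :=
    c.nonempty_supp.exists_eq_singleton_or_nontrivial.resolve_left
      fun ⟨a, ha⟩ ↦ hsingle c (by simp [ha])
  obtain ⟨c₁, c₂, hne, hcc⟩ := Nat.card_eq_two_iff.mp hc
  have hcases (c : (G.induce {v : V | v ≠ x ∧ v ≠ y}).ConnectedComponent) : c = c₁ ∨ c = c₂ := by
    have hmem : c ∈ ({c₁, c₂} : Set _) := hcc ▸ Set.mem_univ c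
    simpa using hmem
  exact hna (admissibleTwoCut_of_isTwoSumOf (isTwoSumOf_of_two_components hxy hadj hne hcases)
    (ncard_edgeSet_addVertex_induce_lt h2 hxy (hnt c₂) (by simp) (by simp)
      (disjoint_pair_union_image_supp hne))
    (ncard_edgeSet_addVertex_induce_lt h2 hxy (hnt c₁) (by simp) (by simp)
      (disjoint_pair_union_image_supp hne.symm)))
end

section
/- If no graph in a class G_1 has a K_{2,m}-minor and no graph in a class G_2 has a K_{2,n}-minor, then no graph obtained by 2-summing a graph from G_1 with finitely many graphs from G_2 (over pairwise nonadjacent degree-2 vertices of the G_1-graph) has a K_{2,mn}-minor. -/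
open SimpleGraph

/-- `G` is the simultaneous 2-sum of `G₀` with the graphs `H i`, `i : Fin t`,
performed over `t` pairwise nonadjacent degree-two vertices `z₀ i` of `G₀`
(with neighbors `x₀ i ≠ y₀ i`) and degree-two vertices `z i` of `H i`
(with neighbors `x i ≠ y i`); the summed vertices are deleted, `x₀ i` is
identified with `x i` and `y₀ i` with `y i`, the edge `xᵢyᵢ` (if present in
either summand) becomes an edge between the identified join vertices. -/
def IsMultiTwoSumOf {V V₀ : Type*} (G : SimpleGraph V) (G₀ : SimpleGraph V₀)
    (t : ℕ) (W : Fin t → Type*) (H : ∀ i, SimpleGraph (W i)) : Prop :=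
  ∃ (z₀ x₀ y₀ : Fin t → V₀) (z x y : ∀ i, W i)
    (f₀ : V₀ → V) (f : ∀ i, W i → V),
    Function.Injective z₀ ∧
    (∀ i, x₀ i ≠ y₀ i) ∧ (∀ i, x i ≠ y i) ∧
    (∀ i j, i ≠ j → ¬ G₀.Adj (z₀ i) (z₀ j)) ∧
    (∀ i u, G₀.Adj (z₀ i) u ↔ (u = x₀ i ∨ u = y₀ i)) ∧
    (∀ i u, (H i).Adj (z i) u ↔ (u = x i ∨ u = y i)) ∧
    Set.InjOn f₀ {v | ∀ i, v ≠ z₀ i} ∧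
    (∀ i, Set.InjOn (f i) {w | w ≠ z i}) ∧
    (∀ i, f₀ (x₀ i) = f i (x i) ∧ f₀ (y₀ i) = f i (y i)) ∧
    (∀ v : V, v ∈ f₀ '' {u | ∀ i, u ≠ z₀ i} ∨ ∃ i, v ∈ f i '' {w | w ≠ z i}) ∧
    (∀ i, (f₀ '' {u | ∀ j, u ≠ z₀ j}) ∩ (f i '' {w | w ≠ z i})
        = {f₀ (x₀ i), f₀ (y₀ i)}) ∧
    (∀ i j, i ≠ j →
      (f i '' {w | w ≠ z i}) ∩ (f j '' {w | w ≠ z j}) ⊆ f₀ '' {u | ∀ k, u ≠ z₀ k}) ∧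
    (∀ u v : V₀, (∀ i, u ≠ z₀ i) → (∀ i, v ≠ z₀ i) →
      (∀ i, s(u, v) ≠ s(x₀ i, y₀ i)) → (G.Adj (f₀ u) (f₀ v) ↔ G₀.Adj u v)) ∧
    (∀ i, ∀ u v : W i, u ≠ z i → v ≠ z i → s(u, v) ≠ s(x i, y i) →
      (G.Adj (f i u) (f i v) ↔ (H i).Adj u v)) ∧
    (∀ i, G.Adj (f₀ (x₀ i)) (f₀ (y₀ i)) ↔ (G₀.Adj (x₀ i) (y₀ i) ∨ (H i).Adj (x i) (y i))) ∧
    (∀ a b : V, G.Adj a b →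
      (a ∈ f₀ '' {u | ∀ i, u ≠ z₀ i} ∧ b ∈ f₀ '' {u | ∀ i, u ≠ z₀ i}) ∨
      ∃ i, a ∈ f i '' {w | w ≠ z i} ∧ b ∈ f i '' {w | w ≠ z i})


/-!
Let `P` be the image of the centre `G₀` in `G`. The part of `G` coming from `H i` meets `P` only in
its two gates, the images of `x₀ i` and `y₀ i`, so an edge leaving its interior ends at a gate.
Fix a `K_{2,mn}`-model in `G`.

Contracting everything outside piece `i` to the path `x i – z i – y i` of `H i` turns the hubs and
the leaves lying in the interior of the piece into a `K_{2,·}`-model of `H i` (as soon as one leaf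
lies there, both hubs reach the piece). Hence fewer than `n` leaves lie in any interior.

If a hub misses `P`, it lies in the interior of one piece, and every leaf either contains one of
its two gates or lies in its interior too; thus `mn ≤ 2 + (n - 1)`, impossible as `m, n ≥ 2`.

If both hubs meet `P`, contract instead every piece to the path `x₀ i – z₀ i – y₀ i` of `G₀`.
Branch sets meeting `P` pull back to connected sets of `G₀`, the vertex `z₀ i` going with the
branch set that contains the gate `x₀ i`. A piece whose interior contains a leaf has a gate in
each hub, and its `z₀ i` becomes a new leaf; since such a piece holds fewer than `n` leaves, at
least `m` leaves survive and `G₀` has a `K_{2,m}`-minor.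
-/

open Finset Function

section

variable {V U : Type*}

theorem SimpleGraph.Connected.inter_nonempty_of_exit {G : SimpleGraph V} {S X N : Set V}
    (hX : ∀ v w, v ∈ X → G.Adj v w → w ∈ X ∨ w ∈ N) (hS : (G.induce S).Connected)
    {v w : V} (hv : v ∈ S) (hvX : v ∈ X) (hw : w ∈ S) (hwX : w ∉ X) : (S ∩ N).Nonempty := by
  obtain ⟨p⟩ := hS.preconnected ⟨v, hv⟩ ⟨w, hw⟩
  obtain ⟨d, -, hd₁, hd₂⟩ := p.exists_boundary_dart (Subtype.val ⁻¹' X) hvX hwX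
  exact ⟨d.snd, d.snd.2, (hX _ _ hd₁ d.adj).resolve_left hd₂⟩

theorem SimpleGraph.connected_induce_singleton (G : SimpleGraph V) (v : V) :
    (G.induce {v}).Connected := by
  rw [induce_singleton_eq_top]
  exact connected_top

namespace SimpleGraph

variable {T : SimpleGraph U} {L : Set U} {u v w : U}

def ReachableIn (T : SimpleGraph U) (L : Set U) (u v : U) : Prop :=
  ∃ (hu : u ∈ L) (hv : v ∈ L), (T.induce L).Reachable ⟨u, hu⟩ ⟨v, hv⟩

theorem ReachableIn.refl (hu : u ∈ L) : T.ReachableIn L u u := ⟨hu, hu, .rfl⟩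

theorem ReachableIn.symm (h : T.ReachableIn L u v) : T.ReachableIn L v u :=
  let ⟨hu, hv, h⟩ := h
  ⟨hv, hu, h.symm⟩

theorem ReachableIn.trans (huv : T.ReachableIn L u v) (hvw : T.ReachableIn L v w) :
    T.ReachableIn L u w :=
  let ⟨hu, _, huv⟩ := huv
  let ⟨_, hw, hvw⟩ := hvw
  ⟨hu, hw, huv.trans hvw⟩

theorem Adj.reachableIn (h : T.Adj u v) (hu : u ∈ L) (hv : v ∈ L) : T.ReachableIn L u v :=
  ⟨hu, hv, Adj.reachable (G := T.induce L) h⟩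

theorem connected_induce_of_forall_reachableIn (hv : v ∈ L)
    (h : ∀ u ∈ L, T.ReachableIn L u v) : (T.induce L).Connected :=
  (connected_iff_exists_forall_reachable _).2
    ⟨⟨v, hv⟩, fun ⟨u, hu⟩ => let ⟨_, _, h⟩ := h u hu; h.symm⟩

end SimpleGraph

/-- A model of `K_{2,J}` in `G`: `hub 0`, `hub 1` are the branch sets of the side of size two. -/
structure K2Model (G : SimpleGraph V) (J : Type*) where
  hub : Fin 2 → Set V
  leaf : J → Set V
  connected_hub : ∀ r, (G.induce (hub r)).Connected
  connected_leaf : ∀ j, (G.induce (leaf j)).Connected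
  disjoint_hub : Pairwise (Disjoint on hub)
  disjoint_hub_leaf : ∀ r j, Disjoint (hub r) (leaf j)
  disjoint_leaf : Pairwise (Disjoint on leaf)
  adj : ∀ r j, ∃ p ∈ hub r, ∃ q ∈ leaf j, G.Adj p q

namespace K2Model

variable {G : SimpleGraph V} {J J' : Type*} (M : K2Model G J)

theorem hub_nonempty (r : Fin 2) : (M.hub r).Nonempty :=
  Set.nonempty_coe_sort.1 (M.connected_hub r).nonempty

theorem leaf_nonempty (j : J) : (M.leaf j).Nonempty :=
  Set.nonempty_coe_sort.1 (M.connected_leaf j).nonempty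

def comap (e : J' ↪ J) : K2Model G J' where
  hub := M.hub
  leaf := M.leaf ∘ e
  connected_hub := M.connected_hub
  connected_leaf j := M.connected_leaf (e j)
  disjoint_hub := M.disjoint_hub
  disjoint_hub_leaf r j := M.disjoint_hub_leaf r (e j)
  disjoint_leaf := M.disjoint_leaf.comp_of_injective e.injective
  adj r j := M.adj r (e j)

end K2Model

theorem isMinor_completeBipartiteGraph_iff {G : SimpleGraph V} {J : Type*} :
    IsMinor G (completeBipartiteGraph (Fin 2) J) ↔ Nonempty (K2Model G J) := by
  constructor
  · rintro ⟨f, -, hconn, hdisj, hadj⟩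
    exact ⟨{ hub := f ∘ Sum.inl
             leaf := f ∘ Sum.inr
             connected_hub := fun r => hconn _
             connected_leaf := fun j => hconn _
             disjoint_hub := fun r r' h => hdisj _ _ (Sum.inl_injective.ne h)
             disjoint_hub_leaf := fun r j => hdisj _ _ Sum.inl_ne_inr
             disjoint_leaf := fun j l h => hdisj _ _ (Sum.inr_injective.ne h)
             adj := fun r j => hadj _ _ (by simp) }⟩
  · rintro ⟨M⟩
    refine ⟨Sum.elim M.hub M.leaf, ?_, ?_, ?_, ?_⟩
    · rintro (r | j)
      · exact M.hub_nonempty r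
      · exact M.leaf_nonempty j
    · rintro (r | j)
      · exact M.connected_hub r
      · exact M.connected_leaf j
    · rintro (r | j) (r' | j') h
      · exact M.disjoint_hub fun e => h (congrArg _ e)
      · exact M.disjoint_hub_leaf r j'
      · exact (M.disjoint_hub_leaf r' j).symm
      · exact M.disjoint_leaf fun e => h (congrArg _ e)
    · rintro (r | j) (r' | j') h <;> simp [completeBipartiteGraph] at h
      · exact M.adj r j'
      · obtain ⟨p, hp, q, hq, hpq⟩ := M.adj r' j
        exact ⟨q, hq, p, hp, hpq.symm⟩

namespace K2Model

variable {G : SimpleGraph V} {J : Type*}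

theorem isMinor_of_le_card (M : K2Model G J) [Fintype J] {k : ℕ} (hk : k ≤ Fintype.card J) :
    IsMinor G (completeBipartiteGraph (Fin 2) (Fin k)) :=
  isMinor_completeBipartiteGraph_iff.2
    ⟨M.comap (Embedding.nonempty_of_card_le (by simpa using hk)).some⟩

open Classical in
theorem card_leaf_inter_nonempty_le (M : K2Model G J) [Fintype J] (s : Finset V) :
    #{j | (M.leaf j ∩ s).Nonempty} ≤ #s :=
  Finset.card_le_card_of_forall_subsingleton (fun j v => v ∈ M.leaf j)
    (fun j hj => by
      obtain ⟨v, hvj, hvs⟩ := (mem_filter.1 hj).2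
      exact ⟨v, hvs, hvj⟩)
    (fun v _ j hj l hl => by
      by_contra hjl
      exact Set.disjoint_left.1 (M.disjoint_leaf hjl) hj.2 hl.2)

end K2Model

theorem two_le_of_not_isMinor {G : SimpleGraph V} {a b c : V} (hab : a ≠ b) (ha : G.Adj c a)
    (hb : G.Adj c b) {k : ℕ} (hG : ¬ IsMinor G (completeBipartiteGraph (Fin 2) (Fin k))) :
    2 ≤ k := by
  by_contra! hk
  let M : K2Model G Unit :=
    { hub := ![{a}, {b}]
      leaf := fun _ => {c}
      connected_hub := fun r => by fin_cases r <;> exact G.connected_induce_singleton _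
      connected_leaf := fun _ => G.connected_induce_singleton c
      disjoint_hub := fun r r' h => by
        fin_cases r <;> fin_cases r' <;> simp_all [Function.onFun, hab.symm]
      disjoint_hub_leaf := fun r _ => by
        fin_cases r <;> simp [ha.ne', hb.ne']
      disjoint_leaf := fun _ _ h => absurd rfl h
      adj := fun r _ => by
        fin_cases r
        · exact ⟨a, rfl, c, rfl, ha.symm⟩
        · exact ⟨b, rfl, c, rfl, hb.symm⟩ }
  exact hG (M.isMinor_of_le_card (by simp; omega))

/-- `T` arises from `G` by replacing each piece `i`, made of `interior i` and the two gates
`f (x i)`, `f (y i)`, by the path `x i – z i – y i`; `f` embeds the other vertices of `T` into `G`.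
An edge of `G` joining the two gates of a piece need not come from `T`. -/
structure PieceContraction (G : SimpleGraph V) (T : SimpleGraph U) (ι : Type*) where
  f : U → V
  dom : Set U
  z : ι → U
  x : ι → U
  y : ι → U
  interior : ι → Set V
  injOn : Set.InjOn f dom
  x_mem : ∀ i, x i ∈ dom
  y_mem : ∀ i, y i ∈ dom
  z_not_mem : ∀ i, z i ∉ dom
  z_injective : Injective z
  x_ne_y : ∀ i, x i ≠ y i
  adj_z_iff : ∀ i u, T.Adj (z i) u ↔ u = x i ∨ u = y i
  adj_of_adj : ∀ u ∈ dom, ∀ v ∈ dom, (∀ i, s(u, v) ≠ s(x i, y i)) → G.Adj (f u) (f v) →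
    T.Adj u v
  exists_mem_interior : ∀ v ∉ f '' dom, ∃ i, v ∈ interior i
  disjoint_interior : ∀ i, Disjoint (interior i) (f '' dom)
  mem_of_adj : ∀ i v w, v ∈ interior i → G.Adj v w →
    w ∈ interior i ∨ w ∈ ({f (x i), f (y i)} : Set V)

namespace PieceContraction

variable {G : SimpleGraph V} {T : SimpleGraph U} {ι : Type*} (P : PieceContraction G T ι)

def range : Set V := P.f '' P.dom

def gates (i : ι) : Set V := {P.f (P.x i), P.f (P.y i)}

theorem gates_subset_range (i : ι) : P.gates i ⊆ P.range := by
  rintro v (rfl | rfl)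
  exacts [⟨_, P.x_mem i, rfl⟩, ⟨_, P.y_mem i, rfl⟩]

theorem two_le_of_not_isMinor (P : PieceContraction G T ι) (i : ι) {k : ℕ}
    (hT : ¬ IsMinor T (completeBipartiteGraph (Fin 2) (Fin k))) : 2 ≤ k :=
  _root_.two_le_of_not_isMinor (P.x_ne_y i) ((P.adj_z_iff i _).2 (.inl rfl))
    ((P.adj_z_iff i _).2 (.inr rfl)) hT

variable {S S' : Set V} {i : ι} {p q : V}

theorem inter_gates_nonempty (hS : (G.induce S).Connected) (hp : p ∈ S)
    (hpi : p ∈ P.interior i) (hSR : (S ∩ P.range).Nonempty) : (S ∩ P.gates i).Nonempty :=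
  let ⟨_, hrS, hrR⟩ := hSR
  hS.inter_nonempty_of_exit (P.mem_of_adj i) hp hpi hrS
    (Set.disjoint_right.1 (P.disjoint_interior i) hrR)

theorem inter_gates_nonempty_of_adj (hS : (G.induce S).Connected) (hSR : (S ∩ P.range).Nonempty)
    (hpi : p ∈ P.interior i) (hq : q ∈ S) (hpq : G.Adj p q) : (S ∩ P.gates i).Nonempty := by
  rcases P.mem_of_adj i p q hpi hpq with hqi | hqg
  · exact P.inter_gates_nonempty hS hq hqi hSR
  · exact ⟨q, hq, hqg⟩

theorem subset_interior (hS : (G.induce S).Connected) (hp : p ∈ S) (hpi : p ∈ P.interior i)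
    (hSg : Disjoint S (P.gates i)) : S ⊆ P.interior i := by
  intro w hw
  by_contra hwi
  obtain ⟨g, hgS, hg⟩ := hS.inter_nonempty_of_exit (P.mem_of_adj i) hp hpi hw hwi
  exact Set.disjoint_left.1 hSg hgS hg

theorem exists_subset_interior (hS : (G.induce S).Connected) (hSR : Disjoint S P.range) :
    ∃ i, S ⊆ P.interior i := by
  obtain ⟨⟨v, hv⟩⟩ := hS.nonempty
  obtain ⟨i, hi⟩ := P.exists_mem_interior v (Set.disjoint_left.1 hSR hv)
  exact ⟨i, P.subset_interior hS hv hi (hSR.mono_right (P.gates_subset_range i))⟩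

variable {D : Finset ι} {u v : U}

/-- The virtual vertex `z i` joins the branch set holding the gate `f (x i)`; for `i ∈ D` it is
kept apart, to form a branch set of its own. -/
def lift (D : Finset ι) (S : Set V) : Set U :=
  P.dom ∩ P.f ⁻¹' S ∪ P.z '' {i | i ∉ D ∧ P.f (P.x i) ∈ S}

theorem mem_lift_of_mem (hu : u ∈ P.dom) (h : P.f u ∈ S) : u ∈ P.lift D S := .inl ⟨hu, h⟩

theorem mem_of_mem_lift (hu : u ∈ P.dom) (h : u ∈ P.lift D S) : P.f u ∈ S := by
  rcases h with ⟨-, h⟩ | ⟨i, -, rfl⟩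
  exacts [h, absurd hu (P.z_not_mem i)]

theorem z_mem_lift (hi : i ∉ D) (h : P.f (P.x i) ∈ S) : P.z i ∈ P.lift D S :=
  .inr ⟨i, ⟨hi, h⟩, rfl⟩

theorem z_mem_lift_iff : P.z i ∈ P.lift D S ↔ i ∉ D ∧ P.f (P.x i) ∈ S := by
  refine ⟨?_, fun h => P.z_mem_lift h.1 h.2⟩
  rintro (⟨hz, -⟩ | ⟨j, hj, hji⟩)
  · exact absurd hz (P.z_not_mem i)
  · rwa [← P.z_injective hji]

theorem disjoint_lift (h : Disjoint S S') : Disjoint (P.lift D S) (P.lift D S') := by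
  rw [Set.disjoint_left]
  rintro _ (⟨hu, huS⟩ | ⟨i, ⟨-, hi⟩, rfl⟩) hu'
  · exact Set.disjoint_left.1 h huS (P.mem_of_mem_lift hu hu')
  · exact Set.disjoint_left.1 h hi (P.z_mem_lift_iff.1 hu').2

theorem eq_x_or_eq_y (hu : u ∈ P.dom) (h : P.f u ∈ P.gates i) : u = P.x i ∨ u = P.y i :=
  h.imp (P.injOn hu (P.x_mem i)) (P.injOn hu (P.y_mem i))

theorem reachableIn_x_y (hD : ∀ i ∈ D, ¬ P.gates i ⊆ S) (hx : P.f (P.x i) ∈ S)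
    (hy : P.f (P.y i) ∈ S) : T.ReachableIn (P.lift D S) (P.x i) (P.y i) := by
  have hz := P.z_mem_lift
    (fun hi => hD i hi (Set.insert_subset hx (Set.singleton_subset_iff.2 hy))) hx
  exact (((P.adj_z_iff i _).2 (.inl rfl)).symm.reachableIn (P.mem_lift_of_mem (P.x_mem i) hx)
    hz).trans (((P.adj_z_iff i _).2 (.inr rfl)).reachableIn hz (P.mem_lift_of_mem (P.y_mem i) hy))

theorem reachableIn_of_mem_gates (hD : ∀ i ∈ D, ¬ P.gates i ⊆ S) (hu : u ∈ P.dom)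
    (hv : v ∈ P.dom) (huS : P.f u ∈ S) (hvS : P.f v ∈ S) (hug : P.f u ∈ P.gates i)
    (hvg : P.f v ∈ P.gates i) : T.ReachableIn (P.lift D S) u v := by
  rcases P.eq_x_or_eq_y hu hug with rfl | rfl <;> rcases P.eq_x_or_eq_y hv hvg with rfl | rfl
  · exact .refl (P.mem_lift_of_mem hu huS)
  · exact P.reachableIn_x_y hD huS hvS
  · exact (P.reachableIn_x_y hD hvS huS).symm
  · exact .refl (P.mem_lift_of_mem hu huS)

theorem reachableIn_of_adj (hD : ∀ i ∈ D, ¬ P.gates i ⊆ S) (hu : u ∈ P.dom) (hv : v ∈ P.dom)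
    (huS : P.f u ∈ S) (hvS : P.f v ∈ S) (h : G.Adj (P.f u) (P.f v)) :
    T.ReachableIn (P.lift D S) u v := by
  by_cases hvirt : ∀ i, s(u, v) ≠ s(P.x i, P.y i)
  · exact (P.adj_of_adj u hu v hv hvirt h).reachableIn (P.mem_lift_of_mem hu huS)
      (P.mem_lift_of_mem hv hvS)
  push Not at hvirt
  obtain ⟨i, hi⟩ := hvirt
  have hg : ∀ w ∈ s(u, v), P.f w ∈ P.gates i := fun w hw =>
    (Sym2.mem_iff.1 (hi ▸ hw)).imp (congrArg P.f) (congrArg P.f)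
  exact P.reachableIn_of_mem_gates hD hu hv huS hvS (hg u (Sym2.mem_mk_left u v))
    (hg v (Sym2.mem_mk_right u v))

theorem reachableIn_of_walk (hD : ∀ i ∈ D, ¬ P.gates i ⊆ S) (hv : v ∈ P.dom) {c b : S}
    (w : (G.induce S).Walk c b) (hb : (b : V) = P.f v) :
    (∀ u ∈ P.dom, P.f u = c → T.ReachableIn (P.lift D S) u v) ∧
    (∀ i, (c : V) ∈ P.interior i →
      ∃ g ∈ P.dom, P.f g ∈ P.gates i ∧ T.ReachableIn (P.lift D S) g v) := by
  induction w with
  | @nil b =>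
    refine ⟨fun u hu hub => ?_, fun i hi => ?_⟩
    · rw [P.injOn hu hv (hub.trans hb)]
      exact .refl (P.mem_lift_of_mem hv (hb ▸ b.2))
    · exact absurd ⟨v, hv, hb.symm⟩ (Set.disjoint_left.1 (P.disjoint_interior i) hi)
  | @cons c c' b hcc' p ih =>
    obtain ⟨ih₁, ih₂⟩ := ih hb
    have hcc' : G.Adj c c' := hcc'
    by_cases hc : (c : V) ∈ P.range
    · refine ⟨fun u hu hcu => ?_,
        fun i hi => absurd hc (Set.disjoint_left.1 (P.disjoint_interior i) hi)⟩
      by_cases hc' : (c' : V) ∈ P.range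
      · obtain ⟨u', hu', hcu'⟩ := hc'
        exact (P.reachableIn_of_adj hD hu hu' (hcu ▸ c.2) (hcu' ▸ c'.2)
          (hcu ▸ hcu' ▸ hcc')).trans (ih₁ u' hu' hcu')
      obtain ⟨i, hi⟩ := P.exists_mem_interior c' hc'
      obtain ⟨g, hg, hgi, hgv⟩ := ih₂ i hi
      have hcg : (c : V) ∈ P.gates i := (P.mem_of_adj i _ _ hi hcc'.symm).resolve_left
        fun hci => Set.disjoint_left.1 (P.disjoint_interior i) hci hc
      exact (P.reachableIn_of_mem_gates hD hu hg (hcu ▸ c.2) (P.mem_of_mem_lift hg hgv.1)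
        (hcu ▸ hcg) hgi).trans hgv
    · refine ⟨fun u hu hcu => absurd ⟨u, hu, hcu⟩ hc, fun i hi => ?_⟩
      rcases P.mem_of_adj i _ _ hi hcc' with hi' | hc'g
      · exact ih₂ i hi'
      · obtain ⟨g, hg, hgc'⟩ := P.gates_subset_range i hc'g
        exact ⟨g, hg, hgc' ▸ hc'g, ih₁ g hg hgc'⟩

theorem connected_lift (hS : (G.induce S).Connected) (hSR : (S ∩ P.range).Nonempty)
    (hD : ∀ i ∈ D, ¬ P.gates i ⊆ S) : (T.induce (P.lift D S)).Connected := by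
  obtain ⟨_, hvS, v, hv, rfl⟩ := hSR
  have hreach : ∀ u ∈ P.dom, P.f u ∈ S → T.ReachableIn (P.lift D S) u v := fun u hu huS =>
    let ⟨w⟩ := hS.preconnected ⟨P.f u, huS⟩ ⟨P.f v, hvS⟩
    (P.reachableIn_of_walk hD hv w rfl).1 u hu rfl
  refine connected_induce_of_forall_reachableIn (P.mem_lift_of_mem hv hvS) ?_
  rintro _ (⟨hu, huS⟩ | ⟨i, ⟨hi, hxS⟩, rfl⟩)
  · exact hreach _ hu huS
  · exact (((P.adj_z_iff i _).2 (.inl rfl)).reachableIn (P.z_mem_lift hi hxS)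
      (P.mem_lift_of_mem (P.x_mem i) hxS)).trans (hreach _ (P.x_mem i) hxS)

theorem exists_adj_lift_of_gates (hSS' : Disjoint S S') (hS : (S ∩ P.gates i).Nonempty)
    (hS' : (S' ∩ P.gates i).Nonempty) (hD : i ∈ D → ¬ P.gates i ⊆ S ∪ S') :
    ∃ a ∈ P.lift D S, ∃ b ∈ P.lift D S', T.Adj a b := by
  obtain ⟨g, hgS, hg⟩ := hS
  obtain ⟨g', hgS', hg'⟩ := hS'
  rcases hg with rfl | rfl <;> rcases hg' with rfl | rfl
  · exact absurd hgS' (Set.disjoint_left.1 hSS' hgS)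
  · have hi : i ∉ D := fun hi => hD hi (Set.insert_subset (.inl hgS) (by simpa using .inr hgS'))
    exact ⟨_, P.z_mem_lift hi hgS, _, P.mem_lift_of_mem (P.y_mem i) hgS',
      (P.adj_z_iff i _).2 (.inr rfl)⟩
  · have hi : i ∉ D := fun hi => hD hi (Set.insert_subset (.inr hgS') (by simpa using .inl hgS))
    exact ⟨_, P.mem_lift_of_mem (P.y_mem i) hgS, _, P.z_mem_lift hi hgS',
      ((P.adj_z_iff i _).2 (.inr rfl)).symm⟩
  · exact absurd hgS' (Set.disjoint_left.1 hSS' hgS)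

theorem exists_adj_lift (hS : (G.induce S).Connected) (hS' : (G.induce S').Connected)
    (hSR : (S ∩ P.range).Nonempty) (hS'R : (S' ∩ P.range).Nonempty) (hSS' : Disjoint S S')
    (hD : ∀ i ∈ D, ¬ P.gates i ⊆ S ∪ S') (hp : p ∈ S) (hq : q ∈ S') (hpq : G.Adj p q) :
    ∃ a ∈ P.lift D S, ∃ b ∈ P.lift D S', T.Adj a b := by
  by_cases hpi : ∃ i, p ∈ P.interior i
  · obtain ⟨i, hpi⟩ := hpi
    exact P.exists_adj_lift_of_gates hSS' (P.inter_gates_nonempty hS hp hpi hSR)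
      (P.inter_gates_nonempty_of_adj hS' hS'R hpi hq hpq) (hD i)
  by_cases hqi : ∃ i, q ∈ P.interior i
  · obtain ⟨i, hqi⟩ := hqi
    exact P.exists_adj_lift_of_gates hSS' (P.inter_gates_nonempty_of_adj hS hSR hqi hp hpq.symm)
      (P.inter_gates_nonempty hS' hq hqi hS'R) (hD i)
  obtain ⟨u, hu, rfl⟩ : p ∈ P.range := by_contra fun h => hpi (P.exists_mem_interior p h)
  obtain ⟨v, hv, rfl⟩ : q ∈ P.range := by_contra fun h => hqi (P.exists_mem_interior q h)
  by_cases hvirt : ∀ i, s(u, v) ≠ s(P.x i, P.y i)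
  · exact ⟨u, P.mem_lift_of_mem hu hp, v, P.mem_lift_of_mem hv hq, P.adj_of_adj u hu v hv hvirt hpq⟩
  push Not at hvirt
  obtain ⟨i, hi⟩ := hvirt
  have hg : ∀ w ∈ s(u, v), P.f w ∈ P.gates i := fun w hw =>
    (Sym2.mem_iff.1 (hi ▸ hw)).imp (congrArg P.f) (congrArg P.f)
  exact P.exists_adj_lift_of_gates hSS' ⟨_, hp, hg u (Sym2.mem_mk_left u v)⟩
    ⟨_, hq, hg v (Sym2.mem_mk_right u v)⟩ (hD i)

variable {J : Type*}

def liftModel (M : K2Model G J) (hhub : ∀ r, (M.hub r ∩ P.range).Nonempty)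
    (hleaf : ∀ j, (M.leaf j ∩ P.range).Nonempty) (D : Finset ι)
    (hD : ∀ i ∈ D, ∀ r, (M.hub r ∩ P.gates i).Nonempty) : K2Model T (J ⊕ D) :=
  have hsplit {X : Set V} (r : Fin 2) (hX : Disjoint X (M.hub r)) : ∀ i ∈ D, ¬ P.gates i ⊆ X :=
    fun i hi h => let ⟨_, hg, hgi⟩ := hD i hi r; Set.disjoint_right.1 hX hg (h hgi)
  { hub := fun r => P.lift D (M.hub r)
    leaf := Sum.elim (fun j => P.lift D (M.leaf j)) fun i => {P.z i}
    connected_hub := fun r =>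
      let ⟨r', hr'⟩ := exists_ne r
      P.connected_lift (M.connected_hub r) (hhub r) (hsplit r' (M.disjoint_hub hr'.symm))
    connected_leaf := by
      rintro (j | i)
      · exact P.connected_lift (M.connected_leaf j) (hleaf j)
          (hsplit 0 (M.disjoint_hub_leaf 0 j).symm)
      · exact T.connected_induce_singleton _
    disjoint_hub := fun r r' h => P.disjoint_lift (M.disjoint_hub h)
    disjoint_hub_leaf := by
      rintro r (j | ⟨i, hi⟩)
      · exact P.disjoint_lift (M.disjoint_hub_leaf r j)
      · exact Set.disjoint_singleton_right.2 fun h => (P.z_mem_lift_iff.1 h).1 hi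
    disjoint_leaf := by
      rintro (j | ⟨i, hi⟩) (j' | ⟨i', hi'⟩) h
      · exact P.disjoint_lift (M.disjoint_leaf fun e => h (congrArg _ e))
      · exact Set.disjoint_singleton_right.2 fun h => (P.z_mem_lift_iff.1 h).1 hi'
      · exact Set.disjoint_singleton_left.2 fun h => (P.z_mem_lift_iff.1 h).1 hi
      · exact Set.disjoint_singleton.2 fun e => h (congrArg _ (Subtype.ext (P.z_injective e)))
    adj := by
      rintro r (j | ⟨i, hi⟩)
      · obtain ⟨p, hp, q, hq, hpq⟩ := M.adj r j
        obtain ⟨r', hr'⟩ := exists_ne r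
        exact P.exists_adj_lift (M.connected_hub r) (M.connected_leaf j) (hhub r) (hleaf j)
          (M.disjoint_hub_leaf r j) (hsplit r' ((M.disjoint_hub hr'.symm).union_left
            (M.disjoint_hub_leaf r' j).symm)) hp hq hpq
      · obtain ⟨g, hg, hgi⟩ := hD i hi r
        obtain ⟨u, hu, rfl⟩ := P.gates_subset_range i hgi
        exact ⟨u, P.mem_lift_of_mem hu hg, P.z i, rfl,
          ((P.adj_z_iff i u).2 (P.eq_x_or_eq_y hu hgi)).symm⟩ }

open Classical in
theorem card_leaf_subset_lt (M : K2Model G J) [Fintype J] {X : Set V} (hXR : X ⊆ P.range)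
    (hX : ∀ v ∈ X, ∀ w, G.Adj v w → w ∈ P.range) {k : ℕ}
    (hT : ¬ IsMinor T (completeBipartiteGraph (Fin 2) (Fin k))) (hk : 0 < k) :
    #{j | M.leaf j ⊆ X} < k := by
  classical
  by_contra! hkJ
  obtain ⟨j₀, hj₀⟩ : Nonempty {j // M.leaf j ⊆ X} :=
    Fintype.card_pos_iff.1 (by rw [Fintype.card_subtype]; omega)
  let M' := M.comap (Embedding.subtype fun j => M.leaf j ⊆ X)
  have hhub : ∀ r, (M'.hub r ∩ P.range).Nonempty := fun r =>
    let ⟨p, hp, q, hq, hpq⟩ := M.adj r j₀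
    ⟨p, hp, hX q (hj₀ hq) p hpq.symm⟩
  have hleaf : ∀ j, (M'.leaf j ∩ P.range).Nonempty := fun j =>
    let ⟨v, hv⟩ := M'.leaf_nonempty j
    ⟨v, hv, hXR (j.2 hv)⟩
  exact hT ((P.liftModel M' hhub hleaf ∅ (by simp)).isMinor_of_le_card
    (by simpa [Fintype.card_subtype] using hkJ))

open Classical in
theorem exists_card_le_of_disjoint_hub (M : K2Model G J) [Fintype J] {r : Fin 2}
    (hr : Disjoint (M.hub r) P.range) :
    ∃ i, Fintype.card J ≤ 2 + #{j | M.leaf j ⊆ P.interior i} := by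
  classical
  obtain ⟨i, hi⟩ := P.exists_subset_interior (M.connected_hub r) hr
  refine ⟨i, ?_⟩
  let g : Finset V := {P.f (P.x i), P.f (P.y i)}
  have hsplit : ∀ j, (M.leaf j ∩ g).Nonempty ∨ M.leaf j ⊆ P.interior i := by
    intro j
    refine or_iff_not_imp_left.2 fun hg => ?_
    obtain ⟨p, hp, q, hq, hpq⟩ := M.adj r j
    rw [coe_pair] at hg
    rcases P.mem_of_adj i p q (hi hp) hpq with hqi | hqg
    · exact P.subset_interior (M.connected_leaf j) hq hqi
        (Set.not_disjoint_iff_nonempty_inter.not_right.2 hg)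
    · exact absurd ⟨q, hq, hqg⟩ hg
  calc Fintype.card J = #(univ : Finset J) := Finset.card_univ.symm
    _ ≤ #(({j | (M.leaf j ∩ g).Nonempty} : Finset J) ∪
          ({j | M.leaf j ⊆ P.interior i} : Finset J)) :=
      card_le_card fun j _ => by simpa only [mem_union, mem_filter_univ] using hsplit j
    _ ≤ #{j | (M.leaf j ∩ g).Nonempty} + #{j | M.leaf j ⊆ P.interior i} := card_union_le _ _
    _ ≤ 2 + #{j | M.leaf j ⊆ P.interior i} := by
      gcongr
      exact (M.card_leaf_inter_nonempty_le g).trans card_le_two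

open Classical in
theorem card_le_add_sum (P : PieceContraction G T ι) [Fintype ι] (M : K2Model G J) [Fintype J] :
    Fintype.card J ≤
      #{j | (M.leaf j ∩ P.range).Nonempty} + ∑ i, #{j | M.leaf j ⊆ P.interior i} := by
  classical
  calc Fintype.card J = #(univ : Finset J) := Finset.card_univ.symm
    _ ≤ #(({j | (M.leaf j ∩ P.range).Nonempty} : Finset J) ∪
          univ.biUnion fun i => {j | M.leaf j ⊆ P.interior i}) := by
      refine card_le_card fun j _ => ?_
      by_cases hj : (M.leaf j ∩ P.range).Nonempty
      · simp [hj]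
      · obtain ⟨i, hi⟩ := P.exists_subset_interior (M.connected_leaf j)
          (Set.not_disjoint_iff_nonempty_inter.not_right.2 hj)
        simpa using .inr ⟨i, hi⟩
    _ ≤ _ := (card_union_le _ _).trans (Nat.add_le_add_left card_biUnion_le _)

open Classical in
theorem isMinor_of_hub_inter_range_nonempty [Fintype ι] (M : K2Model G J) [Fintype J]
    (hhub : ∀ r, (M.hub r ∩ P.range).Nonempty) {m n : ℕ} (hn : 0 < n)
    (hinner : ∀ i, #{j | M.leaf j ⊆ P.interior i} < n) (hJ : m * n ≤ Fintype.card J) :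
    IsMinor T (completeBipartiteGraph (Fin 2) (Fin m)) := by
  classical
  set c := #{j | (M.leaf j ∩ P.range).Nonempty}
  let D : Finset ι := {i | #{j | M.leaf j ⊆ P.interior i} ≠ 0}
  have hD : ∀ i ∈ D, ∀ r, (M.hub r ∩ P.gates i).Nonempty := by
    intro i hi r
    obtain ⟨j, hj⟩ := card_ne_zero.1 (mem_filter.1 hi).2
    obtain ⟨p, hp, q, hq, hpq⟩ := M.adj r j
    exact P.inter_gates_nonempty_of_adj (M.connected_hub r) (hhub r)
      ((mem_filter.1 hj).2 hq) hp hpq.symm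
  have hm : m * n ≤ (c + #D) * n := calc
    m * n ≤ c + ∑ i, #{j | M.leaf j ⊆ P.interior i} := hJ.trans (P.card_le_add_sum M)
    _ = c + ∑ i ∈ D, #{j | M.leaf j ⊆ P.interior i} := by rw [sum_filter_ne_zero]
    _ ≤ c + #D * n := by
      gcongr
      simpa using sum_le_card_nsmul D _ n fun i _ => (hinner i).le
    _ ≤ (c + #D) * n := by nlinarith
  let M' := M.comap (Embedding.subtype fun j => (M.leaf j ∩ P.range).Nonempty)
  exact (P.liftModel M' hhub (fun j => j.2) D hD).isMinor_of_le_card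
    (by simpa [Fintype.card_subtype] using Nat.le_of_mul_le_mul_right hm hn)

end PieceContraction

theorem mem_of_adj_of_mem_diff {G : SimpleGraph V} {ι : Type*} {C : Set V} {Q : ι → Set V}
    (hQQ : ∀ i j, i ≠ j → Q i ∩ Q j ⊆ C)
    (hadj : ∀ a b, G.Adj a b → (a ∈ C ∧ b ∈ C) ∨ ∃ i, a ∈ Q i ∧ b ∈ Q i)
    {i : ι} {v w : V} (hv : v ∈ Q i \ C) (hvw : G.Adj v w) : w ∈ Q i := by
  rcases hadj v w hvw with ⟨hvC, -⟩ | ⟨j, hvj, hwj⟩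
  · exact absurd hvC hv.2
  · obtain rfl | hij := eq_or_ne i j
    · exact hwj
    · exact absurd (hQQ i j hij ⟨hv.1, hvj⟩) hv.2

theorem IsMultiTwoSumOf.exists_pieceContraction {V₀ : Type*} {G : SimpleGraph V}
    {G₀ : SimpleGraph V₀} {t : ℕ} {W : Fin t → Type*} {H : ∀ i, SimpleGraph (W i)}
    (h : IsMultiTwoSumOf G G₀ t W H) :
    ∃ (P₀ : PieceContraction G G₀ (Fin t)) (P : ∀ i, PieceContraction G (H i) Unit),
      ∀ i, P₀.interior i ⊆ (P i).range ∧
        ∀ v ∈ P₀.interior i, ∀ w, G.Adj v w → w ∈ (P i).range := by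
  obtain ⟨z₀, x₀, y₀, z, x, y, f₀, f, hz₀, hxy₀, hxy, hz₀z₀, hz₀adj, hzadj, hf₀, hf, hglue,
    hcover, hCQ, hQQ, hadj₀, hadjH, -, hadj⟩ := h
  set C := f₀ '' {u | ∀ i, u ≠ z₀ i}
  set Q := fun i => f i '' {w | w ≠ z i}
  have hdom₀ : ∀ i u, G₀.Adj (z₀ i) u → ∀ j, u ≠ z₀ j := by
    rintro i u hu j rfl
    obtain rfl | hij := eq_or_ne i j
    exacts [G₀.irrefl hu, hz₀z₀ i j hij hu]
  have hQ : ∀ i v w, v ∈ Q i \ C → G.Adj v w → w ∈ Q i := fun i v w =>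
    mem_of_adj_of_mem_diff hQQ hadj
  let P₀ : PieceContraction G G₀ (Fin t) :=
    { f := f₀, dom := {u | ∀ i, u ≠ z₀ i}, z := z₀, x := x₀, y := y₀
      interior := fun i => Q i \ C
      injOn := hf₀
      x_mem := fun i => hdom₀ i _ ((hz₀adj i _).2 (.inl rfl))
      y_mem := fun i => hdom₀ i _ ((hz₀adj i _).2 (.inr rfl))
      z_not_mem := fun i h => h i rfl
      z_injective := hz₀
      x_ne_y := hxy₀
      adj_z_iff := hz₀adj
      adj_of_adj := fun u hu v hv huv => (hadj₀ u v hu hv huv).1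
      exists_mem_interior := fun v hv => ((hcover v).resolve_left hv).imp fun i hi => ⟨hi, hv⟩
      disjoint_interior := fun i => Set.disjoint_sdiff_left
      mem_of_adj := fun i v w hv hvw => by
        by_cases hwC : w ∈ C
        · exact .inr (hCQ i ▸ ⟨hwC, hQ i v w hv hvw⟩)
        · exact .inl ⟨hQ i v w hv hvw, hwC⟩ }
  refine ⟨P₀, fun i =>
    { f := f i, dom := {w | w ≠ z i}, z := fun _ => z i, x := fun _ => x i, y := fun _ => y i
      interior := fun _ => (Q i)ᶜ
      injOn := hf i
      x_mem := fun _ => ((hzadj i _).2 (.inl rfl)).ne'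
      y_mem := fun _ => ((hzadj i _).2 (.inr rfl)).ne'
      z_not_mem := fun _ h => h rfl
      z_injective := fun _ _ _ => rfl
      x_ne_y := fun _ => hxy i
      adj_z_iff := fun _ => hzadj i
      adj_of_adj := fun u hu v hv huv => (hadjH i u v hu hv (huv ())).1
      exists_mem_interior := fun v hv => ⟨(), hv⟩
      disjoint_interior := fun _ => disjoint_compl_left
      mem_of_adj := fun _ v w hv hvw => by
        by_cases hw : w ∈ Q i
        · by_cases hwC : w ∈ C
          · refine .inr (show w ∈ ({f i (x i), f i (y i)} : Set V) from ?_)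
            rw [← (hglue i).1, ← (hglue i).2, ← hCQ i]
            exact ⟨hwC, hw⟩
          · exact absurd (hQ i w v ⟨hw, hwC⟩ hvw.symm) hv
        · exact .inl hw }, fun i => ⟨Set.sdiff_subset, fun v hv w hvw => hQ i v w hv hvw⟩⟩

end

theorem no_K2mn_minor_of_multiTwoSum_general {V V₀ : Type*} (m n : ℕ)
    (hn : 0 < n)
    (G : SimpleGraph V) (G₀ : SimpleGraph V₀) (t : ℕ)
    (W : Fin t → Type*) (H : ∀ i, SimpleGraph (W i))
    (hsum : IsMultiTwoSumOf G G₀ t W H)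
    (h₀ : ¬ IsMinor G₀ (completeBipartiteGraph (Fin 2) (Fin m)))
    (hH : ∀ i, ¬ IsMinor (H i) (completeBipartiteGraph (Fin 2) (Fin n))) :
    ¬ IsMinor G (completeBipartiteGraph (Fin 2) (Fin (m * n))) := by
  classical
  obtain ⟨P₀, P, hP⟩ := hsum.exists_pieceContraction
  intro hmin
  obtain ⟨M⟩ := isMinor_completeBipartiteGraph_iff.1 hmin
  have hinner : ∀ i, #{j | M.leaf j ⊆ P₀.interior i} < n := fun i =>
    (P i).card_leaf_subset_lt M (hP i).1 (hP i).2 (hH i) hn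
  by_cases hhub : ∀ r, (M.hub r ∩ P₀.range).Nonempty
  · exact h₀ (P₀.isMinor_of_hub_inter_range_nonempty M hhub hn hinner (by simp))
  push Not at hhub
  obtain ⟨r, hr⟩ := hhub
  obtain ⟨i, hi⟩ := P₀.exists_card_le_of_disjoint_hub M
    (Set.disjoint_iff_inter_eq_empty.2 hr)
  have hm₂ := P₀.two_le_of_not_isMinor i h₀
  have hn₂ := (P i).two_le_of_not_isMinor () (hH i)
  have := hinner i
  rw [Fintype.card_fin] at hi
  nlinarith

/-- If `G₀` has no `K_{2,m}`-minor and each `H i` has no `K_{2,n}`-minor, then the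
simultaneous 2-sum `G` of `G₀` with the `H i` has no `K_{2,mn}`-minor. -/
theorem no_K2mn_minor_of_multiTwoSum {V V₀ : Type*} (m n : ℕ)
    (hm : 0 < m) (hn : 0 < n)
    (G : SimpleGraph V) (G₀ : SimpleGraph V₀) (t : ℕ)
    (W : Fin t → Type*) (H : ∀ i, SimpleGraph (W i))
    (hsum : IsMultiTwoSumOf G G₀ t W H)
    (h₀ : ¬ IsMinor G₀ (completeBipartiteGraph (Fin 2) (Fin m)))
    (hH : ∀ i, ¬ IsMinor (H i) (completeBipartiteGraph (Fin 2) (Fin n))) :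
    ¬ IsMinor G (completeBipartiteGraph (Fin 2) (Fin (m * n))) :=
  no_K2mn_minor_of_multiTwoSum_general m n hn G G₀ t W H hsum h₀ hH
end

section
/- Let G be a graph, P an induced path in G, and x a vertex of G not on P such that G − V(P) − x has exactly t connected components, and x has at least (m+2)·n^t neighbors on P. Then either G has a K_{2,n}-minor, or P has a subpath P* such that x has at least m neighbors in P* and no vertex outside V(P) ∪ {x} has a neighbor in P*. -/
/-!
List the neighbours of `x` along `P` in order and induct on the number of components of
`G - V(P) - x`. Cut the neighbours into `n` consecutive blocks of `(m + 1) n^(t-1)` each. If one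
component `C` touches `P` within the span of every block, then `{x}`, `C` and the `n` disjoint
block spans are the branch sets of a `K_{2,n}`-minor. Otherwise the span of some block avoids
`C`, and the induction continues inside that block with the remaining components; when none are
left, a run of `m + 1` neighbours of `x` spans a subpath that no vertex outside `V(P) ∪ {x}`
touches.
-/

open SimpleGraph

open Finset Function

theorem exists_blocks_meeting_or_Icc_avoiding {α ι : Type*} [LinearOrder α] (f : ℕ → α)
    (hf : Monotone f) (B : ι → Set α) (n m : ℕ) (cs : Finset ι) (o N : ℕ)
    (hN : (m + 1) * n ^ #cs ≤ N) :
    (∃ c ∈ cs, ∃ I : Fin n → ℕ × ℕ,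
      (∀ k, o ≤ (I k).1 ∧ (I k).1 ≤ (I k).2 ∧ (I k).2 < o + N ∧
        (B c ∩ Set.Icc (f (I k).1) (f (I k).2)).Nonempty) ∧
      ∀ k l, k < l → (I k).2 < (I l).1) ∨
    ∃ p q, o ≤ p ∧ p ≤ q ∧ p + m ≤ q + 1 ∧ q < o + N ∧
      ∀ c ∈ cs, Disjoint (B c) (Set.Icc (f p) (f q)) := by
  classical
  induction cs using Finset.induction_on generalizing o N with
  | empty =>
    simp only [card_empty, pow_zero, mul_one] at hN
    exact .inr ⟨o, o + N - 1, le_rfl, by omega, by omega, by omega, by simp⟩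
  | @insert c cs hc ih =>
    set s := (m + 1) * n ^ #cs
    have hblock : ∀ k : Fin n, 1 ≤ s ∧ k * s + s ≤ N := fun k => by
      refine ⟨Nat.mul_pos m.succ_pos (Nat.pow_pos k.pos), ?_⟩
      calc k * s + s = (k + 1) * s := by ring
        _ ≤ n * s := Nat.mul_le_mul_right s k.isLt
        _ = (m + 1) * n ^ #(insert c cs) := by rw [card_insert_of_notMem hc, pow_succ]; ring
        _ ≤ N := hN
    by_cases hall : ∀ k : Fin n,
        (B c ∩ Set.Icc (f (o + k * s)) (f (o + k * s + (s - 1)))).Nonempty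
    · refine .inl ⟨c, mem_insert_self c cs, fun k => (o + k * s, o + k * s + (s - 1)),
        fun k => ⟨le_self_add, by dsimp only; omega, by dsimp only; have := hblock k; omega,
          hall k⟩, fun k l hkl => ?_⟩
      have := hblock k
      have : (k + 1) * s ≤ l * s := Nat.mul_le_mul_right s hkl
      dsimp only
      rw [add_one_mul] at this
      omega
    push Not at hall
    obtain ⟨k, hk⟩ := hall
    have ⟨hs, hks⟩ := hblock k
    rcases ih (o + k * s) s le_rfl with
      ⟨c', hc', I, hI, hsep⟩ | ⟨p, q, hop, hpq, hpqm, hq, hfree⟩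
    · exact .inl ⟨c', mem_insert_of_mem hc', I,
        fun l => ⟨by have := hI l; omega, (hI l).2.1, by have := hI l; omega, (hI l).2.2.2⟩, hsep⟩
    · refine .inr ⟨p, q, by omega, hpq, hpqm, by omega, fun c' hc' => ?_⟩
      rcases mem_insert.mp hc' with rfl | hc'
      · refine Set.disjoint_iff_inter_eq_empty.mpr (Set.eq_empty_of_subset_empty ?_)
        rw [← hk]
        exact Set.inter_subset_inter_right _ (Set.Icc_subset_Icc (hf hop) (hf (by omega)))
      · exact hfree c' hc'

theorem Nat.exists_strictMono_forall_lt_count (p : ℕ → Prop) [DecidablePred p] (ℓ : ℕ) :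
    ∃ f : ℕ → ℕ, StrictMono f ∧ ∀ d < Nat.count p ℓ, f d < ℓ ∧ p (f d) := by
  -- padding `p` beyond `ℓ` makes `Nat.nth` strictly monotone on all of `ℕ`
  set q : ℕ → Prop := fun r => r < ℓ → p r
  have hq : (Set.ofPred q).Infinite :=
    Set.infinite_of_forall_exists_gt fun a => ⟨a + ℓ + 1, fun h => by omega, by omega⟩
  refine ⟨Nat.nth q, Nat.nth_strictMono hq, fun d hd => ?_⟩
  have hlt : Nat.nth q d < ℓ :=
    Nat.nth_lt_of_lt_count (hd.trans_le (Nat.count_mono_left fun _ _ hr _ => hr))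
  exact ⟨hlt, Nat.nth_mem_of_infinite hq d hlt⟩

section

variable {V : Type*} {G : SimpleGraph V}

theorem SimpleGraph.ConnectedComponent.connected_induce_image_val {S : Set V}
    (c : (G.induce S).ConnectedComponent) : (G.induce (Subtype.val '' c.supp)).Connected :=
  c.connected_toSimpleGraph.map (induceHom (Embedding.induce S).toHom (Set.mapsTo_image _ _))
    (by rintro ⟨_, w, hw, rfl⟩; exact ⟨⟨w, hw⟩, rfl⟩)

theorem isMinor_completeBipartiteGraph {α β : Type*} (f : α → Set V) (g : β → Set V)
    (hf : ∀ a, (G.induce (f a)).Connected) (hg : ∀ b, (G.induce (g b)).Connected)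
    (hf_disj : Pairwise (Disjoint on f)) (hg_disj : Pairwise (Disjoint on g))
    (hfg : ∀ a b, Disjoint (f a) (g b)) (hadj : ∀ a b, ∃ v ∈ f a, ∃ w ∈ g b, G.Adj v w) :
    IsMinor G (completeBipartiteGraph α β) := by
  refine ⟨Sum.elim f g, ?_, ?_, ?_, ?_⟩
  · rintro (a | b)
    exacts [Set.nonempty_coe_sort.mp (hf a).nonempty, Set.nonempty_coe_sort.mp (hg b).nonempty]
  · rintro (a | b)
    exacts [hf a, hg b]
  · rintro (a | b) (a' | b') hne
    · exact hf_disj fun h => hne (congrArg _ h)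
    · exact hfg a b'
    · exact (hfg a' b).symm
    · exact hg_disj fun h => hne (congrArg _ h)
  · rintro (a | b) (a' | b') hadj'
    · simp at hadj'
    · exact hadj a b'
    · obtain ⟨v, hv, w, hw, hvw⟩ := hadj a' b
      exact ⟨w, hw, v, hv, hvw.symm⟩
    · simp at hadj'

namespace SimpleGraph.Walk

variable {u v : V}

lemma isSubwalk_drop_take (P : G.Walk u v) (i k : ℕ) : ((P.drop i).take k).IsSubwalk P :=
  ((P.drop i).isSubwalk_take k).trans (P.isSubwalk_drop i)

lemma support_drop_take_eq_image (P : G.Walk u v) {i j : ℕ} (hij : i ≤ j) (hj : j ≤ P.length) :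
    {w | w ∈ ((P.drop i).take (j - i)).support} = P.getVert '' Set.Icc i j := by
  ext w
  simp only [Set.mem_ofPred_eq, mem_support_iff_exists_getVert, take_getVert, drop_getVert,
    take_length, drop_length, Set.mem_image, Set.mem_Icc]
  constructor
  · rintro ⟨d, rfl, hd⟩
    exact ⟨i + (j - i) ⊓ d, by omega, rfl⟩
  · rintro ⟨r, hr, rfl⟩
    exact ⟨r - i, by congr 1; omega, by omega⟩

lemma ncard_neighborSet_inter_support_le_count [DecidableRel G.Adj] (P : G.Walk u v) (x : V) :
    (G.neighborSet x ∩ {w | w ∈ P.support}).ncard ≤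
      Nat.count (fun r => G.Adj x (P.getVert r)) (P.length + 1) := by
  rw [Nat.count_eq_card_filter_range, ← Set.ncard_coe_finset]
  calc (G.neighborSet x ∩ {w | w ∈ P.support}).ncard
      ≤ (P.getVert '' ↑({r ∈ range (P.length + 1) | G.Adj x (P.getVert r)})).ncard := by
        refine Set.ncard_le_ncard ?_ (Set.toFinite _)
        rintro w ⟨hxw, hw⟩
        obtain ⟨r, rfl, hr⟩ := mem_support_iff_exists_getVert.mp hw
        exact ⟨r, by simpa [Nat.lt_succ_iff] using ⟨hr, hxw⟩, rfl⟩
    _ ≤ _ := Set.ncard_image_le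

lemma exists_strictMono_adj_getVert (P : G.Walk u v) (x : V) :
    ∃ f : ℕ → ℕ, StrictMono f ∧ ∀ d < (G.neighborSet x ∩ {w | w ∈ P.support}).ncard,
      f d ≤ P.length ∧ G.Adj x (P.getVert (f d)) := by
  classical
  obtain ⟨f, hf, hfP⟩ :=
    Nat.exists_strictMono_forall_lt_count (fun r => G.Adj x (P.getVert r)) (P.length + 1)
  exact ⟨f, hf, fun d hd =>
    (hfP d (hd.trans_le (P.ncard_neighborSet_inter_support_le_count x))).imp_left
      Nat.lt_succ_iff.mp⟩

theorem IsPath.exists_subpath_support_eq_image_Icc {P : G.Walk u v} (hP : P.IsPath) {i j : ℕ}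
    (hij : i ≤ j) (hj : j ≤ P.length) :
    ∃ (a b : V) (P' : G.Walk a b), P'.IsPath ∧ (∀ w, w ∈ P'.support → w ∈ P.support) ∧
      (∀ e, e ∈ P'.edges → e ∈ P.edges) ∧ {w | w ∈ P'.support} = P.getVert '' Set.Icc i j :=
  ⟨_, _, (P.drop i).take (j - i), (hP.drop i).take (j - i),
    fun _ hw => (P.isSubwalk_drop_take i _).support_subset hw,
    fun _ he => (P.isSubwalk_drop_take i _).edges_subset he,
    P.support_drop_take_eq_image hij hj⟩

theorem IsPath.le_ncard_neighborSet_inter_image_Icc [Finite V] {P : G.Walk u v} (hP : P.IsPath)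
    {x : V} {f : ℕ → ℕ} (hf : StrictMono f) {p q : ℕ} (hq : f q ≤ P.length)
    (hfx : ∀ d ∈ Set.Icc p q, G.Adj x (P.getVert (f d))) :
    q + 1 - p ≤ (G.neighborSet x ∩ P.getVert '' Set.Icc (f p) (f q)).ncard := by
  have hinj : Set.InjOn (P.getVert ∘ f) (Set.Icc p q) := fun d hd d' hd' h =>
    hf.injective (hP.getVert_injOn (hf.monotone hd.2 |>.trans hq)
      (hf.monotone hd'.2 |>.trans hq) h)
  calc q + 1 - p = ((P.getVert ∘ f) '' Set.Icc p q).ncard := by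
        rw [hinj.ncard_image, Set.ncard_Icc_nat]
    _ ≤ _ := by
        refine Set.ncard_le_ncard ?_ (Set.toFinite _)
        rintro _ ⟨d, hd, rfl⟩
        exact ⟨hfx d hd, f d, ⟨hf.monotone hd.1, hf.monotone hd.2⟩, rfl⟩

theorem IsPath.isMinor_completeBipartiteGraph_of_segments {P : G.Walk u v} (hP : P.IsPath)
    {x : V} (hx : x ∉ P.support) {C : Set V} (hC : (G.induce C).Connected) (hxC : x ∉ C)
    (hCP : ∀ w ∈ C, w ∉ P.support) {n : ℕ} (I : Fin n → ℕ × ℕ) (hI : ∀ k, (I k).2 ≤ P.length)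
    (hsep : ∀ k l, k < l → (I k).2 < (I l).1)
    (hxI : ∀ k, ∃ r ∈ Set.Icc (I k).1 (I k).2, G.Adj x (P.getVert r))
    (hCI : ∀ k, ∃ r ∈ Set.Icc (I k).1 (I k).2, ∃ w ∈ C, G.Adj w (P.getVert r)) :
    IsMinor G (completeBipartiteGraph (Fin 2) (Fin n)) := by
  set X : Fin n → Set V := fun k => P.getVert '' Set.Icc (I k).1 (I k).2
  have hXP : ∀ k, ∀ w ∈ X k, w ∈ P.support := by
    rintro k _ ⟨r, -, rfl⟩
    exact P.getVert_mem_support r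
  have hX_disj : ∀ k l, k < l → Disjoint (X k) (X l) := by
    refine fun k l hkl => Set.disjoint_left.mpr ?_
    rintro _ ⟨r, ⟨-, hr⟩, rfl⟩ ⟨r', ⟨hr', hr''⟩, he⟩
    have := hP.getVert_injOn (show r' ≤ P.length from hr''.trans (hI l))
      (show r ≤ P.length from hr.trans (hI k)) he
    have := hsep k l hkl
    omega
  refine isMinor_completeBipartiteGraph ![{x}, C] X ?_ (fun k => ?_) ?_ ?_ ?_ ?_
  · have hxconn : (G.induce {x}).Connected := Connected.mk Preconnected.of_subsingleton
    exact Fin.forall_fin_two.mpr ⟨hxconn, hC⟩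
  · obtain ⟨r, hr, -⟩ := hxI k
    have := ((P.drop (I k).1).take ((I k).2 - (I k).1)).connected_induce_support
    rwa [P.support_drop_take_eq_image (hr.1.trans hr.2) (hI k)] at this
  · intro a b hab
    fin_cases a <;> fin_cases b <;> simp_all [onFun]
  · intro k l hkl
    rcases hkl.lt_or_gt with h | h
    exacts [hX_disj k l h, (hX_disj l k h).symm]
  · intro a k
    fin_cases a
    · exact Set.disjoint_singleton_left.mpr fun h => hx (hXP k x h)
    · exact Set.disjoint_left.mpr fun w hw hw' => hCP w hw (hXP k w hw')
  · intro a k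
    fin_cases a
    · obtain ⟨r, hr, hxr⟩ := hxI k
      exact ⟨x, rfl, _, ⟨r, hr, rfl⟩, hxr⟩
    · obtain ⟨r, hr, w, hw, hwr⟩ := hCI k
      exact ⟨w, hw, _, ⟨r, hr, rfl⟩, hwr⟩

end SimpleGraph.Walk

end

theorem subpath_of_many_neighbors_general {V : Type} [Fintype V] (G : SimpleGraph V)
    (n m t : ℕ)
    (u v : V) (P : G.Walk u v) (hP : P.IsPath)
    (x : V) (hx : x ∉ P.support)
    (ht : Nat.card ((G.induce {w : V | w ∉ P.support ∧ w ≠ x}).ConnectedComponent) = t)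
    (hnb : (m + 2) * n ^ t ≤ (G.neighborSet x ∩ {w | w ∈ P.support}).ncard) :
    IsMinor G (completeBipartiteGraph (Fin 2) (Fin n)) ∨
    ∃ (a b : V) (P' : G.Walk a b), P'.IsPath ∧
      (∀ w, w ∈ P'.support → w ∈ P.support) ∧
      (∀ e, e ∈ P'.edges → e ∈ P.edges) ∧
      m ≤ (G.neighborSet x ∩ {w | w ∈ P'.support}).ncard ∧
      (∀ w : V, w ∉ P.support → w ≠ x → ∀ z ∈ P'.support, ¬ G.Adj w z) := by
  set S : Set V := {w | w ∉ P.support ∧ w ≠ x}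
  have : Fintype (G.induce S).ConnectedComponent := Fintype.ofFinite _
  set B : (G.induce S).ConnectedComponent → Set ℕ :=
    fun c => {r | ∃ w : S, (G.induce S).connectedComponentMk w = c ∧ G.Adj w (P.getVert r)}
  obtain ⟨f, hf, hfx⟩ := P.exists_strictMono_adj_getVert x
  have hN : (m + 1) * n ^ #(univ : Finset (G.induce S).ConnectedComponent) ≤
      (G.neighborSet x ∩ {w | w ∈ P.support}).ncard := by
    rw [card_univ, ← Nat.card_eq_fintype_card, ht]
    exact (Nat.mul_le_mul_right _ (by omega)).trans hnb
  rcases exists_blocks_meeting_or_Icc_avoiding f hf.monotone B n m univ 0 _ hN with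
    ⟨c, -, I, hI, hsep⟩ | ⟨p, q, -, hpq, hpqm, hq, hfree⟩
  · refine .inl <| hP.isMinor_completeBipartiteGraph_of_segments hx
      c.connected_induce_image_val (fun ⟨w, _, hw⟩ => w.2.2 hw) (fun _ ⟨w, _, hw⟩ => hw ▸ w.2.1)
      (fun k => (f (I k).1, f (I k).2)) (fun k => (hfx _ (by have := hI k; omega)).1)
      (fun k l hkl => hf (hsep k l hkl)) (fun k => ?_) (fun k => ?_)
    · exact ⟨_, ⟨le_rfl, hf.monotone (hI k).2.1⟩, (hfx _ (by have := hI k; omega)).2⟩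
    · obtain ⟨r, ⟨w, hw, hwr⟩, hr⟩ := (hI k).2.2.2
      exact ⟨r, hr, w, ⟨w, hw, rfl⟩, hwr⟩
  · obtain ⟨a, b, P', hP', hsupp, hedges, hsupport⟩ :=
      hP.exists_subpath_support_eq_image_Icc (hf.monotone hpq) (hfx q (by omega)).1
    refine .inr ⟨a, b, P', hP', hsupp, hedges, ?_, ?_⟩
    · rw [hsupport]
      exact le_trans (by omega) (hP.le_ncard_neighborSet_inter_image_Icc hf (hfx q (by omega)).1
        fun d hd => (hfx d (by have := hd.2; omega)).2)
    · intro w hwP hwx z hz hwz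
      obtain ⟨r, hr, rfl⟩ : z ∈ P.getVert '' Set.Icc (f p) (f q) := hsupport ▸ hz
      exact Set.disjoint_left.mp (hfree _ (mem_univ _)) ⟨⟨w, hwP, hwx⟩, rfl, hwz⟩ hr

/-- If `P` is an induced path of `G`, `x ∉ V(P)`, `G - V(P) - x` has exactly `t`
components, and `x` has at least `(m+2)·n^t` neighbors on `P`, then either `G`
has a `K_{2,n}`-minor or `P` has a subpath `P*` such that `x` has at least `m`
neighbors in `P*` and no vertex outside `V(P) ∪ {x}` has a neighbor in `P*`. -/
theorem subpath_of_many_neighbors {V : Type} [Fintype V] (G : SimpleGraph V)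
    (n m t : ℕ) (hn : 2 ≤ n) (hm : 1 ≤ m)
    (u v : V) (P : G.Walk u v) (hP : P.IsPath)
    (hind : ∀ a ∈ P.support, ∀ b ∈ P.support, G.Adj a b → s(a, b) ∈ P.edges)
    (x : V) (hx : x ∉ P.support)
    (ht : Nat.card ((G.induce {w : V | w ∉ P.support ∧ w ≠ x}).ConnectedComponent) = t)
    (hnb : (m + 2) * n ^ t ≤ (G.neighborSet x ∩ {w | w ∈ P.support}).ncard) :
    IsMinor G (completeBipartiteGraph (Fin 2) (Fin n)) ∨
    ∃ (a b : V) (P' : G.Walk a b), P'.IsPath ∧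
      (∀ w, w ∈ P'.support → w ∈ P.support) ∧
      (∀ e, e ∈ P'.edges → e ∈ P.edges) ∧
      m ≤ (G.neighborSet x ∩ {w | w ∈ P'.support}).ncard ∧
      (∀ w : V, w ∉ P.support → w ≠ x → ∀ z ∈ P'.support, ¬ G.Adj w z) :=
  subpath_of_many_neighbors_general G n m t u v P hP x hx ht hnb
end

section
/- For every positive integer n there exists f(n) such that every simple 0-1 matrix with f(n) columns has rows and columns that can be permuted so that the resulting matrix contains an n×n submatrix (a_{ij}) satisfying one of: (1) a_{ij}=1 iff i=j; (2) a_{ij}=1 iff i≠j; (3) a_{ij}=1 iff i≥j. -/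
open Finset

/-- Min-homogeneous sets for pair colorings. -/
lemma minhomog2 (C : Type) [Fintype C] [DecidableEq C] [Nonempty C] (m : ℕ) :
    ∃ N : ℕ, ∀ (α : Type) [LinearOrder α] (s : Finset α) (χ : α → α → C),
      N ≤ s.card → ∃ t ⊆ s, t.card = m ∧
        ∀ a ∈ t, ∀ b ∈ t, ∀ b' ∈ t, a < b → a < b' → χ a b = χ a b' := by
  induction m with
  | zero =>
    exact ⟨0, fun α _ s χ _ => ⟨∅, empty_subset _, card_empty, by simp⟩⟩
  | succ m ih =>
    obtain ⟨N, hN⟩ := ih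
    refine ⟨1 + Fintype.card C * N, fun α _ s χ hs => ?_⟩
    classical
    have hne : s.Nonempty := card_pos.mp (by omega)
    set a := s.min' hne with ha
    have has : a ∈ s := s.min'_mem hne
    set s' := s.erase a with hs'
    have hs'c : Fintype.card C * N ≤ s'.card := by
      rw [hs', card_erase_of_mem has]; omega
    obtain ⟨c, -, hc⟩ := exists_le_card_fiber_of_mul_le_card_of_maps_to
      (f := fun x => χ a x) (t := (univ : Finset C))
      (fun x _ => mem_univ _) univ_nonempty (by simpa using hs'c)
    obtain ⟨t', ht'sub, ht'card, ht'⟩ := hN α ({x ∈ s' | χ a x = c}) χ hc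
    have ht's' : t' ⊆ s' := ht'sub.trans (filter_subset _ _)
    have hat' : a ∉ t' := fun h => (mem_erase.mp (ht's' h)).1 rfl
    refine ⟨insert a t', ?_, ?_, ?_⟩
    · exact insert_subset has (ht's'.trans (erase_subset _ _))
    · rw [card_insert_of_notMem hat', ht'card]
    · intro a0 ha0 b hb b' hb' hab hab'
      have hlt : ∀ x ∈ t', a < x := fun x hx =>
        lt_of_le_of_ne (s.min'_le x (mem_of_mem_erase (ht's' hx)))
          (Ne.symm (mem_erase.mp (ht's' hx)).1)
      rcases mem_insert.mp ha0 with rfl | ha0'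
      · have hbt : b ∈ t' := (mem_insert.mp hb).resolve_left (fun h => absurd h (by rintro rfl; exact lt_irrefl _ hab))
        have hbt' : b' ∈ t' := (mem_insert.mp hb').resolve_left (fun h => absurd h (by rintro rfl; exact lt_irrefl _ hab'))
        have h1 := (mem_filter.mp (ht'sub hbt)).2
        have h2 := (mem_filter.mp (ht'sub hbt')).2
        rw [h1, h2]
      · have hbt : b ∈ t' := (mem_insert.mp hb).resolve_left
          (by rintro rfl; exact absurd (hlt a0 ha0') (lt_asymm hab))
        have hbt' : b' ∈ t' := (mem_insert.mp hb').resolve_left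
          (by rintro rfl; exact absurd (hlt a0 ha0') (lt_asymm hab'))
        exact ht' a0 ha0' b hbt b' hbt' hab hab'

/-- Ramsey for pair colorings. -/
lemma ramsey2 (C : Type) [Fintype C] [DecidableEq C] [Nonempty C] (m : ℕ) :
    ∃ N : ℕ, ∀ (α : Type) [LinearOrder α] (s : Finset α) (χ : α → α → C),
      N ≤ s.card → ∃ t ⊆ s, t.card = m ∧
        ∀ a ∈ t, ∀ b ∈ t, ∀ a' ∈ t, ∀ b' ∈ t, a < b → a' < b' → χ a b = χ a' b' := by
  obtain ⟨N, hN⟩ := minhomog2 C (Fintype.card C * m + 1)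
  refine ⟨N, fun α _ s χ hs => ?_⟩
  classical
  obtain ⟨t, hts, htc, hmh⟩ := hN α s χ hs
  have hne : t.Nonempty := card_pos.mp (by omega)
  set b0 := t.max' hne with hb0
  set t' := t.erase b0 with ht'
  have ht'c : Fintype.card C * m ≤ t'.card := by
    rw [ht', card_erase_of_mem (t.max'_mem hne)]; omega
  obtain ⟨c, -, hc⟩ := exists_le_card_fiber_of_mul_le_card_of_maps_to
    (f := fun x => χ x b0) (t := (univ : Finset C))
    (fun x _ => mem_univ _) univ_nonempty (by simpa using ht'c)
  obtain ⟨v, hv, hvc⟩ := exists_subset_card_eq hc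
  have hvt' : v ⊆ t' := hv.trans (filter_subset _ _)
  have key : ∀ a ∈ v, ∀ b ∈ v, a < b → χ a b = c := by
    intro a ha b hb hab
    have hat : a ∈ t := mem_of_mem_erase (hvt' ha)
    have hbt : b ∈ t := mem_of_mem_erase (hvt' hb)
    have hab0 : a < b0 := lt_of_le_of_ne (t.le_max' a hat) (mem_erase.mp (hvt' ha)).1
    have h1 := hmh a hat b hbt b0 (t.max'_mem hne) hab hab0
    have h2 := (mem_filter.mp (hv ha)).2
    rw [h1, h2]
  refine ⟨v, (hvt'.trans (erase_subset _ _)).trans hts, hvc, ?_⟩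
  intro a ha b hb a' ha' b' hb' hab hab'
  rw [key a ha b hb hab, key a' ha' b' hb' hab']

/-- Min-homogeneous sets for triple colorings. -/
lemma minhomog3 (C : Type) [Fintype C] [DecidableEq C] [Nonempty C] (L : ℕ) :
    ∃ N : ℕ, ∀ (α : Type) [LinearOrder α] (s : Finset α) (χ : α → α → α → C),
      N ≤ s.card → ∃ t ⊆ s, t.card = L ∧
        ∀ a ∈ t, ∀ b ∈ t, ∀ c ∈ t, ∀ b' ∈ t, ∀ c' ∈ t,
          a < b → b < c → a < b' → b' < c' → χ a b c = χ a b' c' := by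
  induction L with
  | zero =>
    exact ⟨0, fun α _ s χ _ => ⟨∅, empty_subset _, card_empty, by simp⟩⟩
  | succ L ih =>
    obtain ⟨N, hN⟩ := ih
    obtain ⟨N2, hN2⟩ := ramsey2 C N
    refine ⟨1 + N2, fun α _ s χ hs => ?_⟩
    classical
    have hne : s.Nonempty := card_pos.mp (by omega)
    set a := s.min' hne with ha
    have has : a ∈ s := s.min'_mem hne
    set s' := s.erase a with hs'
    have hs'c : N2 ≤ s'.card := by rw [hs', card_erase_of_mem has]; omega
    obtain ⟨u, hus, huc, hu⟩ := hN2 α s' (fun x y => χ a x y) hs'c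
    obtain ⟨t', ht'u, ht'c, ht'⟩ := hN α u χ (le_of_eq huc.symm)
    have ht's' : t' ⊆ s' := ht'u.trans hus
    have hat' : a ∉ t' := fun h => (mem_erase.mp (ht's' h)).1 rfl
    refine ⟨insert a t', insert_subset has (ht's'.trans (erase_subset _ _)),
      by rw [card_insert_of_notMem hat', ht'c], ?_⟩
    intro a0 ha0 b hb c hc b' hb' c' hc' hab hbc hab' hbc'
    have hlt : ∀ x ∈ t', a < x := fun x hx =>
      lt_of_le_of_ne (s.min'_le x (mem_of_mem_erase (ht's' hx)))
        (Ne.symm (mem_erase.mp (ht's' hx)).1)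
    have memt' : ∀ x ∈ insert a t', a < x → x ∈ t' := by
      intro x hx hax
      exact (mem_insert.mp hx).resolve_left (by rintro rfl; exact lt_irrefl _ hax)
    rcases mem_insert.mp ha0 with rfl | ha0'
    · have hb1 := memt' b hb hab
      have hc1 := memt' c hc (hab.trans hbc)
      have hb1' := memt' b' hb' hab'
      have hc1' := memt' c' hc' (hab'.trans hbc')
      exact hu b (ht'u hb1) c (ht'u hc1) b' (ht'u hb1') c' (ht'u hc1') hbc hbc'
    · have ha0lt := hlt a0 ha0'
      have hb1 := memt' b hb (ha0lt.trans hab)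
      have hc1 := memt' c hc ((ha0lt.trans hab).trans hbc)
      have hb1' := memt' b' hb' (ha0lt.trans hab')
      have hc1' := memt' c' hc' ((ha0lt.trans hab').trans hbc')
      exact ht' a0 ha0' b hb1 c hc1 b' hb1' c' hc1' hab hbc hab' hbc'

/-- Ramsey for triple colorings. -/
lemma ramsey3 (C : Type) [Fintype C] [DecidableEq C] [Nonempty C] (m : ℕ) :
    ∃ N : ℕ, ∀ (α : Type) [LinearOrder α] (s : Finset α) (χ : α → α → α → C),
      N ≤ s.card → ∃ t ⊆ s, t.card = m ∧
        ∀ a ∈ t, ∀ b ∈ t, ∀ c ∈ t, ∀ a' ∈ t, ∀ b' ∈ t, ∀ c' ∈ t,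
          a < b → b < c → a' < b' → b' < c' → χ a b c = χ a' b' c' := by
  obtain ⟨N, hN⟩ := minhomog3 C (Fintype.card C * m + 2)
  refine ⟨N, fun α _ s χ hs => ?_⟩
  classical
  obtain ⟨t, hts, htc, hmh⟩ := hN α s χ hs
  have hne : t.Nonempty := card_pos.mp (by omega)
  set m1 := t.max' hne with hm1
  set t1 := t.erase m1 with ht1
  have ht1c : t1.card = Fintype.card C * m + 1 := by
    rw [ht1, card_erase_of_mem (t.max'_mem hne), htc]; omega
  have hne1 : t1.Nonempty := card_pos.mp (by omega)
  set m2 := t1.max' hne1 with hm2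
  set t2 := t1.erase m2 with ht2
  have ht2c : Fintype.card C * m ≤ t2.card := by
    rw [ht2, card_erase_of_mem (t1.max'_mem hne1), ht1c]; omega
  have hm1t : m1 ∈ t := t.max'_mem hne
  have hm2t : m2 ∈ t := mem_of_mem_erase (t1.max'_mem hne1)
  have hm21 : m2 < m1 :=
    lt_of_le_of_ne (t.le_max' m2 hm2t) (mem_erase.mp (t1.max'_mem hne1)).1
  have hup : ∀ x ∈ t2, x < m2 := fun x hx =>
    lt_of_le_of_ne (t1.le_max' x (mem_of_mem_erase hx)) (mem_erase.mp hx).1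
  obtain ⟨c, -, hc⟩ := exists_le_card_fiber_of_mul_le_card_of_maps_to
    (f := fun x => χ x m2 m1) (t := (univ : Finset C))
    (fun x _ => mem_univ _) univ_nonempty (by simpa using ht2c)
  obtain ⟨v, hv, hvc⟩ := exists_subset_card_eq hc
  have hvt2 : v ⊆ t2 := hv.trans (filter_subset _ _)
  have hvt : v ⊆ t := fun x hx =>
    mem_of_mem_erase (mem_of_mem_erase (hvt2 hx))
  have key : ∀ a ∈ v, ∀ b ∈ v, ∀ cc ∈ v, a < b → b < cc → χ a b cc = c := by
    intro a ha b hb cc hcc hab hbc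
    have h1 := hmh a (hvt ha) b (hvt hb) cc (hvt hcc) m2 hm2t m1 hm1t hab hbc
      (hup a (hvt2 ha)) hm21
    have h2 := (mem_filter.mp (hv ha)).2
    rw [h1, h2]
  refine ⟨v, hvt.trans hts, hvc, ?_⟩
  intro a ha b hb cc hcc a' ha' b' hb' cc' hcc' hab hbc hab' hbc'
  rw [key a ha b hb cc hcc hab hbc, key a' ha' b' hb' cc' hcc' hab' hbc']

/-- For every `n ≥ 1` there exists `f(n)` such that every simple 0-1 matrix with
`f(n)` columns contains (after permuting rows and columns) an `n × n` submatrix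
that is an identity pattern, a complement-of-identity pattern, or a (lower)
triangular pattern. -/
theorem unavoidable_simple_matrices (n : ℕ) (hn : 0 < n) :
    ∃ f : ℕ, ∀ (R : Type) (M : R → Fin f → Bool),
      (Function.Injective fun c : Fin f => fun r : R => M r c) →
      ∃ (ρ : Fin n ↪ R) (γ : Fin n ↪ Fin f),
        (∀ i j : Fin n, M (ρ i) (γ j) = true ↔ i = j) ∨
        (∀ i j : Fin n, M (ρ i) (γ j) = true ↔ i ≠ j) ∨
        (∀ i j : Fin n, M (ρ i) (γ j) = true ↔ j ≤ i) := by
  classical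
  obtain ⟨N, hN⟩ := ramsey3 (Bool × Bool × Bool × Bool) (2 * n + 1)
  refine ⟨N + 2, fun R M hinj => ?_⟩
  -- every two distinct columns differ at some row
  have key : ∀ a b : Fin (N + 2), a ≠ b → ∃ r, M r a ≠ M r b := by
    intro a b hab
    by_contra h
    push_neg at h
    exact hab (hinj (funext h))
  obtain ⟨r₀, -⟩ := key 0 1 (by simp [Fin.ext_iff])
  -- a witness row distinguishing two columns
  let w : Fin (N + 2) → Fin (N + 2) → R := fun a b =>
    if h : ∃ r, M r a ≠ M r b then h.choose else r₀
  have wspec : ∀ a b, a ≠ b → M (w a b) a ≠ M (w a b) b := by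
    intro a b hab
    have h := key a b hab
    simp only [w, dif_pos h]
    exact h.choose_spec
  let χ : Fin (N + 2) → Fin (N + 2) → Fin (N + 2) → Bool × Bool × Bool × Bool :=
    fun a b c => (M (w a b) a, M (w a b) c, M (w a c) b, M (w b c) a)
  obtain ⟨t, -, htc, hmono⟩ := hN (Fin (N + 2)) univ χ (by simp)
  let e : Fin (2 * n + 1) ↪o Fin (N + 2) := t.orderEmbOfFin htc
  have hmem : ∀ k : Fin (2 * n + 1), e k ∈ t := fun k => t.orderEmbOfFin_mem htc k
  have hemono : StrictMono e := e.strictMono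
  let X : Fin n → Fin (N + 2) := fun i => e ⟨2 * i.val, by omega⟩
  let Y : Fin n → Fin (N + 2) := fun i => e ⟨2 * i.val + 1, by omega⟩
  let top : Fin (N + 2) := e ⟨2 * n, by omega⟩
  let u : Fin n → R := fun i => w (X i) (Y i)
  have hXY : ∀ i, X i < Y i := fun i => hemono (by simp [Fin.lt_def])
  have hYtop : ∀ i : Fin n, Y i < top := fun i => hemono (by simp only [Fin.lt_def]; omega)
  have hYX : ∀ i j : Fin n, i < j → Y i < X j := fun i j hij =>
    hemono (by simp only [Fin.lt_def]; have := Fin.lt_def.mp hij; omega)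
  set i0 : Fin n := ⟨0, hn⟩ with hi0
  set c₀ := χ (X i0) (Y i0) top with hc₀
  -- the constant color of all triples in t
  have hconst : ∀ a ∈ t, ∀ b ∈ t, ∀ c ∈ t, a < b → b < c → χ a b c = c₀ := by
    intro a ha b hb c hc hab hbc
    exact hmono a ha b hb c hc (X i0) (hmem _) (Y i0) (hmem _) top (hmem _)
      hab hbc (hXY i0) (hYtop i0)
  set β := c₀.1 with hβdef
  set cR := c₀.2.1 with hcRdef
  set cL := c₀.2.2.2 with hcLdef
  have hβ : ∀ i, M (u i) (X i) = β := by
    intro i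
    have := hconst (X i) (hmem _) (Y i) (hmem _) top (hmem _) (hXY i) (hYtop i)
    exact congrArg Prod.fst this
  have hnotβ : ∀ i, M (u i) (Y i) = !β := by
    intro i
    have h := wspec (X i) (Y i) (ne_of_lt (hXY i))
    rw [hβ i] at h
    exact Bool.eq_not_iff.mpr (Ne.symm h)
  have hR : ∀ i : Fin n, ∀ z ∈ t, Y i < z → M (u i) z = cR := by
    intro i z hz hlt
    have := hconst (X i) (hmem _) (Y i) (hmem _) z hz (hXY i) hlt
    exact congrArg (fun p => p.2.1) this
  have hL : ∀ i : Fin n, ∀ z ∈ t, z < X i → M (u i) z = cL := by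
    intro i z hz hlt
    have := hconst z hz (X i) (hmem _) (Y i) (hmem _) hlt (hXY i)
    exact congrArg (fun p => p.2.2.2) this
  -- columns with diagonal 1 resp. 0
  let d1 : Fin n → Fin (N + 2) := fun i => if β then X i else Y i
  let d0 : Fin n → Fin (N + 2) := fun i => if β then Y i else X i
  have hd1 : ∀ i, M (u i) (d1 i) = true := by
    intro i; cases hb : β <;> simp only [d1, hb, if_true, if_false, Bool.false_eq_true] <;>
      simp [hβ i, hnotβ i, hb]
  have hd0 : ∀ i, M (u i) (d0 i) = false := by
    intro i; cases hb : β <;> simp only [d0, hb, if_true, if_false, Bool.false_eq_true] <;>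
      simp [hβ i, hnotβ i, hb]
  have hd1mem : ∀ i, d1 i ∈ t := fun i => by
    unfold d1; split <;> exact hmem _
  have hd0mem : ∀ i, d0 i ∈ t := fun i => by
    unfold d0; split <;> exact hmem _
  have hr1 : ∀ i, X i ≤ d1 i ∧ d1 i ≤ Y i := by
    intro i; unfold d1; split
    · exact ⟨le_rfl, (hXY i).le⟩
    · exact ⟨(hXY i).le, le_rfl⟩
  have hr0 : ∀ i, X i ≤ d0 i ∧ d0 i ≤ Y i := by
    intro i; unfold d0; split
    · exact ⟨(hXY i).le, le_rfl⟩
    · exact ⟨le_rfl, (hXY i).le⟩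
  have hlt1 : ∀ i j : Fin n, j < i → M (u i) (d1 j) = cL := fun i j h =>
    hL i _ (hd1mem j) (lt_of_le_of_lt (hr1 j).2 (hYX j i h))
  have hgt1 : ∀ i j : Fin n, i < j → M (u i) (d1 j) = cR := fun i j h =>
    hR i _ (hd1mem j) (lt_of_lt_of_le (hYX i j h) (hr1 j).1)
  have hlt0 : ∀ i j : Fin n, j < i → M (u i) (d0 j) = cL := fun i j h =>
    hL i _ (hd0mem j) (lt_of_le_of_lt (hr0 j).2 (hYX j i h))
  have hgt0 : ∀ i j : Fin n, i < j → M (u i) (d0 j) = cR := fun i j h =>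
    hR i _ (hd0mem j) (lt_of_lt_of_le (hYX i j h) (hr0 j).1)
  have hd1inj : Function.Injective d1 := by
    have : StrictMono d1 := fun i j hij =>
      lt_of_le_of_lt (hr1 i).2 (lt_of_lt_of_le (hYX i j hij) (hr1 j).1)
    exact this.injective
  have hd0inj : Function.Injective d0 := by
    have : StrictMono d0 := fun i j hij =>
      lt_of_le_of_lt (hr0 i).2 (lt_of_lt_of_le (hYX i j hij) (hr0 j).1)
    exact this.injective
  -- case analysis on the off-diagonal colors
  cases hcl : cL <;> cases hcr : cR
  -- cL = false, cR = false : identity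
  · have P : ∀ i j : Fin n, M (u i) (d1 j) = true ↔ i = j := by
      intro i j
      rcases lt_trichotomy i j with h | h | h
      · rw [hgt1 i j h, hcr]; simp [ne_of_lt h]
      · subst h; simp [hd1 i]
      · rw [hlt1 i j h, hcl]; simp [(ne_of_lt h).symm]
    have huinj : Function.Injective u := by
      intro i j hij
      have h1 : M (u i) (d1 i) = true := (P i i).mpr rfl
      rw [hij] at h1
      exact ((P j i).mp h1).symm
    exact ⟨⟨u, huinj⟩, ⟨d1, hd1inj⟩, Or.inl P⟩
  -- cL = false, cR = true : reversed triangle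
  · have P : ∀ i j : Fin n, M (u i) (d1 j) = true ↔ i ≤ j := by
      intro i j
      rcases lt_trichotomy i j with h | h | h
      · rw [hgt1 i j h, hcr]; simp [le_of_lt h]
      · subst h; simp [hd1 i]
      · rw [hlt1 i j h, hcl]; simp [not_le_of_gt h]
    have P' : ∀ i j : Fin n, M (u i.rev) (d1 j.rev) = true ↔ j ≤ i := by
      intro i j
      rw [P i.rev j.rev, Fin.rev_le_rev]
    have huinj : Function.Injective (fun i : Fin n => u i.rev) := by
      intro i j hij
      have hij' : u i.rev = u j.rev := hij
      have h1 : M (u i.rev) (d1 i.rev) = true := (P' i i).mpr le_rfl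
      have h2 : M (u j.rev) (d1 j.rev) = true := (P' j j).mpr le_rfl
      rw [hij'] at h1
      rw [← hij'] at h2
      exact le_antisymm ((P' j i).mp h1) ((P' i j).mp h2)
    exact ⟨⟨fun i => u i.rev, huinj⟩,
      ⟨fun j => d1 j.rev, hd1inj.comp Fin.rev_injective⟩, Or.inr (Or.inr P')⟩
  -- cL = true, cR = false : triangle
  · have P : ∀ i j : Fin n, M (u i) (d1 j) = true ↔ j ≤ i := by
      intro i j
      rcases lt_trichotomy i j with h | h | h
      · rw [hgt1 i j h, hcr]; simp [not_le_of_gt h]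
      · subst h; simp [hd1 i]
      · rw [hlt1 i j h, hcl]; simp [le_of_lt h]
    have huinj : Function.Injective u := by
      intro i j hij
      have h1 : M (u i) (d1 i) = true := (P i i).mpr le_rfl
      have h2 : M (u j) (d1 j) = true := (P j j).mpr le_rfl
      rw [hij] at h1
      rw [← hij] at h2
      exact le_antisymm ((P j i).mp h1) ((P i j).mp h2)
    exact ⟨⟨u, huinj⟩, ⟨d1, hd1inj⟩, Or.inr (Or.inr P)⟩
  -- cL = true, cR = true : complement of identity
  · have P : ∀ i j : Fin n, M (u i) (d0 j) = true ↔ i ≠ j := by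
      intro i j
      rcases lt_trichotomy i j with h | h | h
      · rw [hgt0 i j h, hcr]; simp [ne_of_lt h]
      · subst h; simp [hd0 i]
      · rw [hlt0 i j h, hcl]; simp [(ne_of_lt h).symm]
    have huinj : Function.Injective u := by
      intro i j hij
      by_contra hne
      have h1 : ¬ M (u i) (d0 i) = true := by simp [hd0 i]
      rw [hij] at h1
      exact h1 ((P j i).mpr (Ne.symm hne))
    exact ⟨⟨u, huinj⟩, ⟨d0, hd0inj⟩, Or.inr (Or.inl P)⟩
end

section
/- Let G be 2-connected and let (G, L) be a labeled graph with no admissible 2-cut, where L is a stable set whose vertices all have degree two. If G is a cycle, then G has at most 6 vertices. -/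
open SimpleGraph

/-!
A connected graph in which every vertex has degree two is a cycle `C_n`. Cutting `C_n` at two
vertices at cyclic distance `d` writes it as the 2-sum of `C_{d+2}` and `C_{n-d+2}` (each arc is
closed up by a new vertex of degree two), and both summands have fewer than `n` edges when
`3 ≤ d ≤ n - 3`. For `n ≥ 7` pick a vertex `v ∉ L`; the vertices at distance `3` and `4` from `v`
are adjacent, so one of them lies outside the stable set `L`, and cutting there is admissible.
-/

section

variable {V W V₁ V₂ : Type*}

theorem IsTwoSumOf.map {G : SimpleGraph V} {G' : SimpleGraph W} {G₁ : SimpleGraph V₁}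
    {G₂ : SimpleGraph V₂} {j₁ j₂ : V} (e : G ≃g G') (h : IsTwoSumOf G G₁ G₂ j₁ j₂) :
    IsTwoSumOf G' G₁ G₂ (e j₁) (e j₂) := by
  obtain ⟨z₁, x₁, y₁, z₂, x₂, y₂, f₁, f₂, hxy₁, hxy₂, hz₁, hz₂, hinj₁, hinj₂, hx₁, hy₁, hx₂, hy₂,
    hcover, hinter, hadj₁, hadj₂, hjoin, hedge⟩ := h
  refine ⟨z₁, x₁, y₁, z₂, x₂, y₂, e ∘ f₁, e ∘ f₂, hxy₁, hxy₂, hz₁, hz₂,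
    e.injective.comp_injOn hinj₁, e.injective.comp_injOn hinj₂, by simp [hx₁], by simp [hy₁],
    by simp [hx₂], by simp [hy₂], fun v => ?_, ?_,
    fun u v hu hv huv => e.map_adj_iff.trans (hadj₁ u v hu hv huv),
    fun u v hu hv huv => e.map_adj_iff.trans (hadj₂ u v hu hv huv),
    e.map_adj_iff.trans hjoin, fun a b hab => ?_⟩
  · rw [← e.apply_symm_apply v, Set.image_comp, Set.image_comp, ← Set.image_union]
    exact Set.mem_image_of_mem e (hcover _)
  · rw [Set.image_comp, Set.image_comp, ← Set.image_inter e.injective, hinter, Set.image_pair]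
  · rw [← e.apply_symm_apply a, ← e.apply_symm_apply b, Set.image_comp, Set.image_comp]
    simpa only [e.injective.mem_set_image] using hedge _ _ (e.symm.map_adj_iff.mpr hab)

theorem AdmissibleTwoCut.map {G : SimpleGraph V} {G' : SimpleGraph W} {x y : V} (e : G ≃g G')
    (h : AdmissibleTwoCut G x y) : AdmissibleTwoCut G' (e x) (e y) := by
  obtain ⟨n₁, n₂, G₁, G₂, hsum, h₁, h₂⟩ := h
  rw [Set.ncard_congr' e.mapEdgeSet] at h₁ h₂
  exact ⟨n₁, n₂, G₁, G₂, hsum.map e, h₁, h₂⟩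

end

namespace SimpleGraph

variable {V W : Type*} {n a : ℕ}

noncomputable def Copy.isoOfSurjective [Finite W] {A : SimpleGraph V} {B : SimpleGraph W}
    (f : Copy A B) (hf : Function.Surjective f)
    (hdeg : ∀ v, (B.neighborSet (f v)).ncard ≤ (A.neighborSet v).ncard) : A ≃g B where
  toEquiv := Equiv.ofBijective f ⟨f.injective, hf⟩
  map_rel_iff' {a b} := by
    refine ⟨fun h => ?_, fun h => f.toHom.map_adj h⟩
    have hsub : f '' A.neighborSet a ⊆ B.neighborSet (f a) :=
      Set.image_subset_iff.mpr fun w hw => f.toHom.map_adj hw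
    have heq := Set.eq_of_subset_of_ncard_le hsub
      ((hdeg a).trans (Set.ncard_image_of_injective _ f.injective).ge) (Set.toFinite _)
    exact f.injective.mem_set_image.mp (heq ▸ h)

theorem Connected.exists_isHamiltonianCycle_of_ncard_neighborSet_eq_two [Finite V]
    [DecidableEq V] {G : SimpleGraph V} (hG : G.Connected)
    (h2 : ∀ v, (G.neighborSet v).ncard = 2) (v : V) :
    ∃ p : G.Walk v v, p.IsHamiltonianCycle := by
  obtain ⟨p, hp, hverts⟩ :=
    IsCycles.exists_cycle_toSubgraph_verts_eq_connectedComponentSupp (fun w _ => h2 w)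
      ((G.connectedComponentMk v).mem_supp_iff v |>.mpr rfl)
      (Set.nonempty_of_ncard_ne_zero (by rw [h2]; omega))
  refine ⟨p, hp, hp.isPath_tail.isHamiltonian_of_mem fun w => ?_⟩
  have hw : w ∈ p.support := by
    rw [← p.mem_verts_toSubgraph, hverts, ConnectedComponent.mem_supp_iff,
      ConnectedComponent.eq]
    exact hG w v
  rw [p.support_tail_of_not_nil hp.not_nil]
  rcases eq_or_ne w v with rfl | hne
  · exact p.end_mem_tail_support hp.not_nil
  · rw [← p.cons_tail_support] at hw
    exact (List.mem_cons.mp hw).resolve_left hne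

theorem cycleGraph_adj_iff_val (hn : 2 ≤ n) {u v : Fin n} :
    (cycleGraph n).Adj u v ↔ u.val = v.val + 1 ∨ v.val = u.val + 1 ∨
      u.val + n = v.val + 1 ∨ v.val + n = u.val + 1 := by
  have sub_val_eq_one (x y : Fin n) :
      (x - y).val = 1 ↔ x.val = y.val + 1 ∨ x.val + n = y.val + 1 := by
    rcases le_or_gt y x with h | h
    · rw [Fin.coe_sub_iff_le.mpr h]; omega
    · rw [Fin.coe_sub_iff_lt.mpr h]; omega
  rw [cycleGraph_adj', sub_val_eq_one, sub_val_eq_one]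
  omega

theorem cycleGraph_adj_last_iff (ha : 1 ≤ a) (u : Fin (a + 2)) :
    (cycleGraph (a + 2)).Adj (Fin.last (a + 1)) u ↔ u = 0 ∨ u = ⟨a, by omega⟩ := by
  have := u.isLt
  rw [cycleGraph_adj_iff_val (by omega), Fin.ext_iff, Fin.ext_iff, Fin.val_last, Fin.val_zero]
  dsimp only
  omega

theorem cycleGraph_ncard_neighborSet (hn : 3 ≤ n) (v : Fin n) :
    ((cycleGraph n).neighborSet v).ncard = 2 := by
  obtain ⟨k, rfl⟩ : ∃ k, n = k + 3 := ⟨n - 3, by omega⟩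
  rw [← Nat.card_coe_set_eq, Nat.card_eq_fintype_card, card_neighborSet_eq_degree,
    cycleGraph_degree_three_le]

theorem cycleGraph_ncard_edgeSet (hn : 3 ≤ n) : (cycleGraph n).edgeSet.ncard = n := by
  obtain ⟨k, rfl⟩ : ∃ k, n = k + 3 := ⟨n - 3, by omega⟩
  have handshake := sum_degrees_eq_twice_card_edges (cycleGraph (k + 3))
  simp only [cycleGraph_degree_three_le, Finset.sum_const, Finset.card_univ, Fintype.card_fin,
    smul_eq_mul] at handshake
  rw [← coe_edgeFinset, Set.ncard_coe_finset]
  omega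

def cycleGraph.addRightIso [NeZero n] (i : Fin n) : cycleGraph n ≃g cycleGraph n where
  toEquiv := Equiv.addRight i
  map_rel_iff' := by simp [cycleGraph_adj']

theorem Connected.nonempty_iso_cycleGraph_of_ncard_neighborSet_eq_two [Fintype V]
    {G : SimpleGraph V} (hG : G.Connected) (h2 : ∀ v, (G.neighborSet v).ncard = 2) :
    Nonempty (cycleGraph (Fintype.card V) ≃g G) := by
  classical
  obtain ⟨v⟩ := hG.nonempty
  obtain ⟨p, hp⟩ := hG.exists_isHamiltonianCycle_of_ncard_neighborSet_eq_two h2 v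
  have hn : 3 ≤ Fintype.card V := hp.length_eq ▸ hp.isCycle.three_le_length
  obtain ⟨f⟩ := (cycleGraph_isContained_iff hn).mpr ⟨v, p, hp.isCycle, hp.length_eq⟩
  have hf : Function.Surjective f :=
    ((Fintype.bijective_iff_injective_and_card f).mpr ⟨f.injective, by simp⟩).2
  exact ⟨f.isoOfSurjective hf fun v => by rw [h2, cycleGraph_ncard_neighborSet hn]⟩

theorem _root_.Fin.image_castLE_ne_last (h : a + 2 ≤ n) :
    Fin.castLE h '' {u | u ≠ Fin.last (a + 1)} = {v | v.val ≤ a} := by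
  ext v
  constructor
  · rintro ⟨u, hu, rfl⟩
    have := Fin.val_lt_last hu
    simp only [Set.mem_ofPred_eq, Fin.val_castLE]
    omega
  · intro hv
    exact ⟨⟨v.val, by simp at hv; omega⟩, Fin.ne_of_val_ne (by simp at hv ⊢; omega), rfl⟩

theorem cycleGraph_adj_castLE_iff (h : a + 2 ≤ n) {u v : Fin (a + 2)}
    (hu : u ≠ Fin.last (a + 1)) (hv : v ≠ Fin.last (a + 1)) :
    (cycleGraph n).Adj (Fin.castLE h u) (Fin.castLE h v) ↔ (cycleGraph (a + 2)).Adj u v := by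
  have := Fin.val_lt_last hu
  have := Fin.val_lt_last hv
  rw [cycleGraph_adj_iff_val (by omega), cycleGraph_adj_iff_val (by omega), Fin.val_castLE,
    Fin.val_castLE]
  omega

/-- The arc `a, a + 1, …, n - 1, 0` of the `n`-cycle; the spare last index also goes to `0`. -/
def cycleArc (n a : ℕ) [NeZero n] (k : Fin (n - a + 2)) : Fin n :=
  ⟨if k.val < n - a then a + k.val else 0, by have := NeZero.pos n; split_ifs <;> omega⟩

variable [NeZero n]

theorem val_cycleArc (k : Fin (n - a + 2)) :
    k.val < n - a ∧ (cycleArc n a k).val = a + k.val ∨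
      n - a ≤ k.val ∧ (cycleArc n a k).val = 0 := by
  simp only [cycleArc]
  split_ifs <;> omega

theorem image_cycleArc_ne_last :
    cycleArc n a '' {u | u ≠ Fin.last (n - a + 1)} = {v | a ≤ v.val ∨ v.val = 0} := by
  ext v
  constructor
  · rintro ⟨k, -, rfl⟩
    have := val_cycleArc (a := a) k
    simp only [Set.mem_ofPred_eq]
    omega
  · rintro (hv | hv)
    · refine ⟨⟨v.val - a, by omega⟩, Fin.ne_of_val_ne (by simp; omega), Fin.ext ?_⟩
      have := val_cycleArc (n := n) (a := a) ⟨v.val - a, by omega⟩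
      dsimp only at this
      omega
    · refine ⟨⟨n - a, by omega⟩, Fin.ne_of_val_ne (by simp), Fin.ext ?_⟩
      have := val_cycleArc (n := n) (a := a) ⟨n - a, by omega⟩
      dsimp only at this
      omega

theorem injOn_cycleArc (ha : a ≠ 0) : Set.InjOn (cycleArc n a) {u | u ≠ Fin.last (n - a + 1)} := by
  intro u hu v hv huv
  have := Fin.val_lt_last hu
  have := Fin.val_lt_last hv
  have := val_cycleArc u
  have := val_cycleArc v
  have := congrArg Fin.val huv
  ext
  omega

theorem cycleGraph_adj_cycleArc_iff {u v : Fin (n - a + 2)} (ha : 2 ≤ a) (han : a + 2 ≤ n)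
    (hu : u ≠ Fin.last (n - a + 1)) (hv : v ≠ Fin.last (n - a + 1)) :
    (cycleGraph n).Adj (cycleArc n a u) (cycleArc n a v) ↔ (cycleGraph (n - a + 2)).Adj u v := by
  have := Fin.val_lt_last hu
  have := Fin.val_lt_last hv
  have := val_cycleArc u
  have := val_cycleArc v
  rw [cycleGraph_adj_iff_val (by omega), cycleGraph_adj_iff_val (by omega)]
  omega

theorem isTwoSumOf_cycleGraph (ha : 2 ≤ a) (han : a + 2 ≤ n) :
    IsTwoSumOf (cycleGraph n) (cycleGraph (a + 2)) (cycleGraph (n - a + 2)) 0 ⟨a, by omega⟩ := by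
  have hn : 2 ≤ n := by omega
  have hcast : ∀ v : Fin n, v ∈ Fin.castLE han '' {u | u ≠ Fin.last (a + 1)} ↔ v.val ≤ a :=
    fun v => by rw [Fin.image_castLE_ne_last]; rfl
  have harc : ∀ v : Fin n, v ∈ cycleArc n a '' {u | u ≠ Fin.last (n - a + 1)} ↔
      a ≤ v.val ∨ v.val = 0 :=
    fun v => by rw [image_cycleArc_ne_last]; rfl
  refine ⟨Fin.last _, 0, ⟨a, by omega⟩, Fin.last _, ⟨n - a, by omega⟩, 0, Fin.castLE han,
    cycleArc n a, Fin.ne_of_val_ne (by simp; omega), Fin.ne_of_val_ne (by simp; omega),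
    fun u => cycleGraph_adj_last_iff (by omega) u,
    fun u => (cycleGraph_adj_last_iff (by omega) u).trans or_comm,
    (Fin.castLE_injective han).injOn, injOn_cycleArc (by omega), rfl, rfl, Fin.ext ?_, Fin.ext ?_,
    fun v => ?_, ?_, fun _ _ hu hv _ => cycleGraph_adj_castLE_iff han hu hv,
    fun _ _ hu hv _ => cycleGraph_adj_cycleArc_iff ha han hu hv, ?_, fun u v huv => ?_⟩
  · simp [cycleArc]
  · simp [cycleArc]; omega
  · rw [Set.mem_union, hcast, harc]
    omega
  · ext v
    simp only [Set.mem_inter_iff, hcast, harc, Set.mem_insert_iff, Set.mem_singleton_iff,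
      Fin.ext_iff, Fin.val_zero]
    omega
  · rw [cycleGraph_adj_iff_val hn, cycleGraph_adj_iff_val (by omega),
      cycleGraph_adj_iff_val (by omega)]
    simp only [Fin.val_zero]
    omega
  · rw [cycleGraph_adj_iff_val hn] at huv
    rw [hcast, hcast, harc, harc]
    omega

theorem admissibleTwoCut_cycleGraph {i j : Fin n} (hij : 3 ≤ (j - i).val)
    (hji : (j - i).val + 3 ≤ n) : AdmissibleTwoCut (cycleGraph n) i j := by
  have hcut : AdmissibleTwoCut (cycleGraph n) 0 ⟨(j - i).val, by omega⟩ := by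
    refine ⟨_, _, _, _, isTwoSumOf_cycleGraph (by omega) (by omega), ?_, ?_⟩ <;>
      rw [cycleGraph_ncard_edgeSet (by omega), cycleGraph_ncard_edgeSet (by omega)] <;> omega
  have h0 : cycleGraph.addRightIso i 0 = i := zero_add i
  have hj : cycleGraph.addRightIso i ⟨(j - i).val, by omega⟩ = j := sub_add_cancel j i
  simpa only [h0, hj] using AdmissibleTwoCut.map (cycleGraph.addRightIso i) hcut

end SimpleGraph

theorem cycle_le_six_of_no_admissible_general {V : Type} [Fintype V]
    (G : SimpleGraph V) (L : Set V)
    (hstable : ∀ u ∈ L, ∀ v ∈ L, ¬ G.Adj u v)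
    (hna : ∀ x y : V, x ∉ L → y ∉ L → ¬ AdmissibleTwoCut G x y)
    (hcyc : G.Connected ∧ ∀ v : V, (G.neighborSet v).ncard = 2) :
    Fintype.card V ≤ 6 := by
  obtain ⟨hconn, hreg⟩ := hcyc
  by_contra! hn
  have : NeZero (Fintype.card V) := ⟨by omega⟩
  obtain ⟨e⟩ := hconn.nonempty_iso_cycleGraph_of_ncard_neighborSet_eq_two hreg
  have not_mem_or_not_mem (j : Fin (Fintype.card V)) : e j ∉ L ∨ e (j + 1) ∉ L := by
    by_contra! h
    refine hstable _ h.1 _ h.2 (e.map_adj_iff.mpr ?_)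
    rw [cycleGraph_adj', add_sub_cancel_left, Fin.val_one', Nat.mod_eq_of_lt (by omega)]
    exact Or.inr rfl
  obtain ⟨i, hi⟩ : ∃ i, e i ∉ L := (not_mem_or_not_mem 0).elim (⟨_, ·⟩) (⟨_, ·⟩)
  have mem_of_dist (j : Fin (Fintype.card V)) (hij : 3 ≤ (j - i).val)
      (hji : (j - i).val + 3 ≤ Fintype.card V) : e j ∈ L := by
    by_contra hj
    exact hna _ _ hi hj (AdmissibleTwoCut.map e (admissibleTwoCut_cycleGraph hij hji))
  have h3 : ((i + 3) - i).val = 3 := by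
    simp [Nat.mod_eq_of_lt (show 3 < Fintype.card V by omega)]
  have h4 : ((i + 3 + 1) - i).val = 4 := by
    simp [add_assoc, Fin.val_add, Nat.mod_eq_of_lt (show 1 < Fintype.card V by omega),
      Nat.mod_eq_of_lt (show 3 < Fintype.card V by omega),
      Nat.mod_eq_of_lt (show 4 < Fintype.card V by omega)]
  exact (not_mem_or_not_mem (i + 3)).elim (· (mem_of_dist _ (by omega) (by omega)))
    (· (mem_of_dist _ (by omega) (by omega)))

/-- If `(G, L)` is a labeled graph (G 2-connected, L a stable set of degree-two
vertices) with no admissible 2-cut, and `G` is a cycle, then `G` has at most 6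
vertices. -/
theorem cycle_le_six_of_no_admissible {V : Type} [Fintype V]
    (G : SimpleGraph V) (L : Set V)
    (h2 : TwoConnected G)
    (hstable : ∀ u ∈ L, ∀ v ∈ L, ¬ G.Adj u v)
    (hdeg : ∀ v ∈ L, (G.neighborSet v).ncard = 2)
    (hna : ∀ x y : V, x ∉ L → y ∉ L → ¬ AdmissibleTwoCut G x y)
    (hcyc : G.Connected ∧ ∀ v : V, (G.neighborSet v).ncard = 2) :
    Fintype.card V ≤ 6 :=
  cycle_le_six_of_no_admissible_general G L hstable hna hcyc
end
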